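/- arXiv:2401.00100 — 2 statements merged into one kernel-verified Lean document; each statement's English description precedes it below -/
import Mathlib

section
/- Let n ∈ {1,2,3,4} and let f : ℝⁿ → [0,∞) be a smooth function. Assume there is a constant a > 0 such that Δf(x) ≥ −a·(f(x) + f(x)^{3/2}) for every x ∈ ℝⁿ, and assume moreover that f ∈ L¹(ℝⁿ). Then f ∈ L^p(ℝⁿ) for every p ∈ [1,∞], and there exists a constant C_f > 0 (depending on f) such that ‖f‖_{L^p(ℝⁿ)} ≤ C_f·‖f‖_{L¹(ℝⁿ)} for every p ∈ [1,∞]. -/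
open MeasureTheory Metric
open scoped ENNReal

/-- The Euclidean Laplacian `Δf = ∑ i ∂²f/∂xᵢ²` on `ℝⁿ`. -/
noncomputable def laplacian {n : ℕ} (f : EuclideanSpace ℝ (Fin n) → ℝ)
    (x : EuclideanSpace ℝ (Fin n)) : ℝ :=
  ∑ i : Fin n,
    iteratedFDeriv ℝ 2 f x ![EuclideanSpace.single i 1, EuclideanSpace.single i 1]

open Set Filter
open scoped Topology

namespace Heinz

variable {n : ℕ}

/-- cube of the positive part; a `C¹` function. -/
noncomputable def q3 (s : ℝ) : ℝ := max s 0 ^ 3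

lemma q3_nonneg (s : ℝ) : 0 ≤ q3 s := pow_nonneg (le_max_right _ _) _

lemma q3_hasDerivAt (s : ℝ) : HasDerivAt q3 (3 * max s 0 ^ 2) s := by
  rcases lt_trichotomy s 0 with hs | hs | hs
  · have hev : q3 =ᶠ[𝓝 s] fun _ => (0 : ℝ) := by
      filter_upwards [Iio_mem_nhds hs] with t ht
      simp [q3, max_eq_right (le_of_lt (mem_Iio.1 ht))]
    have h0 : max s 0 = 0 := max_eq_right hs.le
    rw [h0]
    simpa using (hasDerivAt_const s (0 : ℝ)).congr_of_eventuallyEq hev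
  · subst hs
    rw [hasDerivAt_iff_tendsto_slope]
    have hb : ∀ t : ℝ, ‖slope q3 0 t‖ ≤ t ^ 2 := by
      intro t
      rcases le_or_gt t 0 with ht | ht
      · have : q3 t = 0 := by
          rcases eq_or_lt_of_le ht with h | h
          · simp [q3, h]
          · simp [q3, max_eq_right h.le]
        have h0 : q3 0 = 0 := by simp [q3]
        simp [slope_def_field, this, h0, div_eq_mul_inv, sq_nonneg]
      · have : q3 t = t ^ 3 := by simp [q3, max_eq_left ht.le]
        rw [slope_def_field, this]
        have : (t ^ 3 - q3 0) / (t - 0) = t ^ 2 := by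
          simp [q3]
          field_simp
        rw [this, Real.norm_eq_abs, abs_of_nonneg (sq_nonneg t)]
    have htend : Tendsto (fun t : ℝ => t ^ 2) (𝓝[≠] (0:ℝ)) (𝓝 0) := by
      have : Tendsto (fun t : ℝ => t ^ 2) (𝓝 (0:ℝ)) (𝓝 0) := by
        simpa using (continuous_pow 2).tendsto (0 : ℝ)
      exact this.mono_left nhdsWithin_le_nhds
    have := squeeze_zero_norm hb htend
    simpa using this
  · have hev : q3 =ᶠ[𝓝 s] fun t => t ^ 3 := by
      filter_upwards [Ioi_mem_nhds hs] with t ht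
      simp [q3, max_eq_left (le_of_lt (mem_Ioi.1 ht))]
    have h0 : max s 0 = s := max_eq_left hs.le
    rw [h0]
    have := hasDerivAt_pow 3 s
    norm_num at this
    exact this.congr_of_eventuallyEq hev

lemma q3_continuous : Continuous q3 := by
  unfold q3; continuity

variable {n : ℕ}

/-- radial weight `ρ(y) = (1-‖y‖²)₊²`. -/
noncomputable def rho (n : ℕ) (y : EuclideanSpace ℝ (Fin n)) : ℝ := max (1 - ‖y‖ ^ 2) 0 ^ 2

/-- radial potential `Φ(y) = -(1-‖y‖²)₊³/6`, satisfying `∇Φ(y) = ρ(y)·y`. -/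
noncomputable def phi (n : ℕ) (y : EuclideanSpace ℝ (Fin n)) : ℝ :=
  (-1 / 6 : ℝ) * q3 (1 - ‖y‖ ^ 2)

lemma rho_nonneg (y : EuclideanSpace ℝ (Fin n)) : 0 ≤ rho n y := sq_nonneg _

lemma rho_le_one (y : EuclideanSpace ℝ (Fin n)) : rho n y ≤ 1 := by
  have h1 : max (1 - ‖y‖ ^ 2) 0 ≤ 1 :=
    max_le (by nlinarith [sq_nonneg ‖y‖]) zero_le_one
  have := pow_le_one₀ (le_max_right (1 - ‖y‖ ^ 2) 0) h1 (n := 2)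
  simpa [rho] using this

lemma phi_nonpos (y : EuclideanSpace ℝ (Fin n)) : phi n y ≤ 0 := by
  have := q3_nonneg (1 - ‖y‖ ^ 2)
  unfold phi; nlinarith

lemma rho_eq_zero {y : EuclideanSpace ℝ (Fin n)} (hy : 1 ≤ ‖y‖) : rho n y = 0 := by
  have : 1 - ‖y‖ ^ 2 ≤ 0 := by nlinarith
  simp [rho, max_eq_right this]

lemma phi_eq_zero {y : EuclideanSpace ℝ (Fin n)} (hy : 1 ≤ ‖y‖) : phi n y = 0 := by
  have : 1 - ‖y‖ ^ 2 ≤ 0 := by nlinarith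
  simp [phi, q3, max_eq_right this]

lemma hasFDerivAt_phi (y : EuclideanSpace ℝ (Fin n)) :
    HasFDerivAt (phi n) (rho n y • innerSL ℝ y) y := by
  have h1 : HasFDerivAt (fun y : EuclideanSpace ℝ (Fin n) => ‖y‖ ^ 2)
      (2 • innerSL ℝ y) y := (hasStrictFDerivAt_norm_sq y).hasFDerivAt
  have h2 : HasFDerivAt (fun y : EuclideanSpace ℝ (Fin n) => 1 - ‖y‖ ^ 2)
      ((0 : EuclideanSpace ℝ (Fin n) →L[ℝ] ℝ) - 2 • innerSL ℝ y) y :=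
    (hasFDerivAt_const (1:ℝ) y).sub h1
  have h3 := (q3_hasDerivAt (1 - ‖y‖ ^ 2)).comp_hasFDerivAt y h2
  have h4 := h3.const_mul (-1 / 6 : ℝ)
  have heq : ((-1 / 6 : ℝ) • ((3 * max (1 - ‖y‖ ^ 2) 0 ^ 2) •
      ((0 : EuclideanSpace ℝ (Fin n) →L[ℝ] ℝ) - 2 • innerSL ℝ y)))
      = rho n y • innerSL ℝ y := by
    ext v
    simp [rho, ContinuousLinearMap.smul_apply]
    ring
  rw [heq] at h4
  exact h4.congr_of_eventuallyEq (by filter_upwards with z; rfl)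

lemma differentiable_phi : Differentiable ℝ (phi n) :=
  fun y => (hasFDerivAt_phi y).differentiableAt

lemma fderiv_phi_apply (y : EuclideanSpace ℝ (Fin n)) (i : Fin n) :
    fderiv ℝ (phi n) y (EuclideanSpace.single i 1) = rho n y * y i := by
  rw [(hasFDerivAt_phi y).fderiv]
  simp [ContinuousLinearMap.smul_apply, EuclideanSpace.inner_single_right]

lemma continuous_rho : Continuous (rho n) := by
  apply Continuous.pow
  exact (continuous_const.sub (continuous_norm.pow 2)).max continuous_const

lemma continuous_phi : Continuous (phi n) := differentiable_phi.continuous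

lemma hcs_rho : HasCompactSupport (rho n) := by
  apply HasCompactSupport.intro (isCompact_closedBall (0 : EuclideanSpace ℝ (Fin n)) 1)
  intro y hy
  apply rho_eq_zero
  have h : ¬ ‖y‖ ≤ 1 := by simpa [mem_closedBall, dist_eq_norm] using hy
  linarith [not_le.1 h]

lemma hcs_phi : HasCompactSupport (phi n) := by
  apply HasCompactSupport.intro (isCompact_closedBall (0 : EuclideanSpace ℝ (Fin n)) 1)
  intro y hy
  apply phi_eq_zero
  have h : ¬ ‖y‖ ≤ 1 := by simpa [mem_closedBall, dist_eq_norm] using hy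
  linarith [not_le.1 h]

lemma integrable_rho : Integrable (rho n) :=
  continuous_rho.integrable_of_hasCompactSupport hcs_rho

lemma integrable_phi : Integrable (phi n) :=
  continuous_phi.integrable_of_hasCompactSupport hcs_phi

lemma integrable_neg_phi : Integrable (fun y : EuclideanSpace ℝ (Fin n) => -phi n y) :=
  integrable_phi.neg

/-- `c₁ = ∫ ρ`. -/
noncomputable def c1 (n : ℕ) : ℝ := ∫ y : EuclideanSpace ℝ (Fin n), rho n y

/-- `c₂ = ∫ (-Φ)`. -/
noncomputable def c2 (n : ℕ) : ℝ := ∫ y : EuclideanSpace ℝ (Fin n), -phi n y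

lemma c1_pos : 0 < c1 n := by
  rw [c1, integral_pos_iff_support_of_nonneg_ae (Filter.Eventually.of_forall (rho_nonneg))
    integrable_rho]
  have hsub : ball (0 : EuclideanSpace ℝ (Fin n)) 1 ⊆ Function.support (rho n) := by
    intro y hy
    have hy1 : ‖y‖ < 1 := by simpa [mem_ball, dist_eq_norm] using hy
    have hpos : 0 < 1 - ‖y‖ ^ 2 := by nlinarith [norm_nonneg y]
    have : 0 < rho n y := by
      rw [rho, max_eq_left hpos.le]; positivity
    exact this.ne'
  exact lt_of_lt_of_le (measure_ball_pos volume 0 one_pos) (measure_mono hsub)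

lemma c2_pos : 0 < c2 n := by
  rw [c2, integral_pos_iff_support_of_nonneg_ae
    (Filter.Eventually.of_forall (fun y => neg_nonneg.2 (phi_nonpos y)))
    integrable_neg_phi]
  have hsub : ball (0 : EuclideanSpace ℝ (Fin n)) 1
      ⊆ Function.support (fun y => -phi n y) := by
    intro y hy
    have hy1 : ‖y‖ < 1 := by simpa [mem_ball, dist_eq_norm] using hy
    have hpos : 0 < 1 - ‖y‖ ^ 2 := by nlinarith [norm_nonneg y]
    have : 0 < -phi n y := by
      rw [phi, q3, max_eq_left hpos.le]
      have := pow_pos hpos 3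
      nlinarith
    exact this.ne'
  exact lt_of_lt_of_le (measure_ball_pos volume 0 one_pos) (measure_mono hsub)


variable {n : ℕ}

lemma lap_eq (u : EuclideanSpace ℝ (Fin n) → ℝ) (z : EuclideanSpace ℝ (Fin n)) :
    laplacian u z = ∑ i : Fin n, fderiv ℝ (fderiv ℝ u) z
      (EuclideanSpace.single i 1) (EuclideanSpace.single i 1) := by
  unfold laplacian
  refine Finset.sum_congr rfl fun i _ => ?_
  rw [iteratedFDeriv_two_apply]
  simp

lemma lap_continuous (u : EuclideanSpace ℝ (Fin n) → ℝ) (hu : ContDiff ℝ (⊤ : ℕ∞) u) :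
    Continuous (laplacian u) := by
  have h2 : Continuous (fderiv ℝ (fderiv ℝ u)) :=
    ((hu.fderiv_right (m := (⊤ : ℕ∞)) (by simp)).fderiv_right (m := (⊤ : ℕ∞)) (by simp)).continuous
  have : laplacian u = fun z => ∑ i : Fin n, fderiv ℝ (fderiv ℝ u) z
      (EuclideanSpace.single i 1) (EuclideanSpace.single i 1) := funext fun z => lap_eq u z
  rw [this]
  exact continuous_finset_sum _ fun i _ =>
    (h2.clm_apply continuous_const).clm_apply continuous_const

section IBP

variable (u : EuclideanSpace ℝ (Fin n) → ℝ) (x₀ : EuclideanSpace ℝ (Fin n)) (ε : ℝ)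

lemma affine_hasFDerivAt (y : EuclideanSpace ℝ (Fin n)) :
    HasFDerivAt (fun y : EuclideanSpace ℝ (Fin n) => x₀ + ε • y)
      (ε • ContinuousLinearMap.id ℝ (EuclideanSpace ℝ (Fin n))) y :=
  ((hasFDerivAt_id y).const_smul ε).const_add x₀

lemma affine_continuous :
    Continuous (fun y : EuclideanSpace ℝ (Fin n) => x₀ + ε • y) :=
  continuous_const.add (continuous_const_smul ε)

variable (hu : ContDiff ℝ (⊤ : ℕ∞) u)
include hu

lemma Gi_hasFDerivAt (v : EuclideanSpace ℝ (Fin n)) (y : EuclideanSpace ℝ (Fin n)) :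
    HasFDerivAt (fun y => fderiv ℝ u (x₀ + ε • y) v)
      (((ContinuousLinearMap.apply ℝ ℝ v).comp
          (fderiv ℝ (fderiv ℝ u) (x₀ + ε • y))).comp
        (ε • ContinuousLinearMap.id ℝ (EuclideanSpace ℝ (Fin n)))) y := by
  have hD1 : HasFDerivAt (fderiv ℝ u) (fderiv ℝ (fderiv ℝ u) (x₀ + ε • y)) (x₀ + ε • y) :=
    ((hu.fderiv_right (m := (⊤ : ℕ∞)) (by simp)).differentiable (by simp) (x₀ + ε • y)).hasFDerivAt
  have happ := (ContinuousLinearMap.apply ℝ ℝ v).hasFDerivAt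
    (x := fderiv ℝ u (x₀ + ε • y))
  exact (happ.comp _ hD1).comp y (affine_hasFDerivAt x₀ ε y)

lemma Gi_fderiv_apply (v w : EuclideanSpace ℝ (Fin n)) (y : EuclideanSpace ℝ (Fin n)) :
    fderiv ℝ (fun y => fderiv ℝ u (x₀ + ε • y) v) y w
      = ε * fderiv ℝ (fderiv ℝ u) (x₀ + ε • y) w v := by
  rw [(Gi_hasFDerivAt u x₀ ε hu v y).fderiv]
  simp [ContinuousLinearMap.smul_apply, _root_.map_smul]

lemma Gi_continuous (v : EuclideanSpace ℝ (Fin n)) :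
    Continuous (fun y => fderiv ℝ u (x₀ + ε • y) v) :=
  (((hu.fderiv_right (m := (⊤ : ℕ∞)) (by simp)).continuous).comp (affine_continuous x₀ ε)).clm_apply
    continuous_const

end IBP


section IBP2

variable (u : EuclideanSpace ℝ (Fin n) → ℝ) (x₀ : EuclideanSpace ℝ (Fin n)) (ε : ℝ)
variable (hu : ContDiff ℝ (⊤ : ℕ∞) u)
include hu

omit hu in
lemma sum_single_smul (y : EuclideanSpace ℝ (Fin n)) :
    ∑ i : Fin n, y i • EuclideanSpace.single i (1:ℝ) = y := by
  have := (EuclideanSpace.basisFun (Fin n) ℝ).sum_repr y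
  simpa [EuclideanSpace.basisFun_apply, EuclideanSpace.basisFun_repr] using this

lemma ibp_key :
    ∫ y, fderiv ℝ u (x₀ + ε • y) y * rho n y
      = -(ε * ∫ y, phi n y * laplacian u (x₀ + ε • y)) := by
  classical
  set e : Fin n → EuclideanSpace ℝ (Fin n) := fun i => EuclideanSpace.single i 1 with he
  -- integrability of all the players
  have hGc : ∀ i, Continuous (fun y => fderiv ℝ u (x₀ + ε • y) (e i)) :=
    fun i => Gi_continuous u x₀ ε hu (e i)
  have hcoord : ∀ i : Fin n, Continuous (fun y : EuclideanSpace ℝ (Fin n) => y i) :=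
    fun i => (EuclideanSpace.proj (𝕜 := ℝ) i).continuous
  have hD2c : Continuous (fun y => fderiv ℝ (fderiv ℝ u) (x₀ + ε • y)) :=
    ((hu.fderiv_right (m := (⊤ : ℕ∞)) (by simp)).fderiv_right (m := (⊤ : ℕ∞)) (by simp)).continuous.comp
      (affine_continuous x₀ ε)
  have hInt1 : ∀ i : Fin n, Integrable
      (fun y => fderiv ℝ (phi n) y (e i) * fderiv ℝ u (x₀ + ε • y) (e i)) := by
    intro i
    have heq : (fun y => fderiv ℝ (phi n) y (e i) * fderiv ℝ u (x₀ + ε • y) (e i))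
        = fun y => (rho n y * y i) * fderiv ℝ u (x₀ + ε • y) (e i) :=
      funext fun y => by rw [fderiv_phi_apply]
    rw [heq]
    exact (((continuous_rho.mul (hcoord i)).mul (hGc i)).integrable_of_hasCompactSupport
      ((hcs_rho.mul_right).mul_right))
  have hInt2 : ∀ i : Fin n, Integrable
      (fun y => phi n y * fderiv ℝ (fun y => fderiv ℝ u (x₀ + ε • y) (e i)) y (e i)) := by
    intro i
    have heq : (fun y => phi n y * fderiv ℝ (fun y => fderiv ℝ u (x₀ + ε • y) (e i)) y (e i))
        = fun y => phi n y * (ε * fderiv ℝ (fderiv ℝ u) (x₀ + ε • y) (e i) (e i)) :=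
      funext fun y => by rw [Gi_fderiv_apply u x₀ ε hu]
    rw [heq]
    refine (continuous_phi.mul (continuous_const.mul
      ((hD2c.clm_apply continuous_const).clm_apply continuous_const))).integrable_of_hasCompactSupport
      hcs_phi.mul_right
  have hInt3 : ∀ i : Fin n, Integrable (fun y => phi n y * fderiv ℝ u (x₀ + ε • y) (e i)) :=
    fun i => (continuous_phi.mul (hGc i)).integrable_of_hasCompactSupport hcs_phi.mul_right
  -- integration by parts in each coordinate direction
  have hibp : ∀ i : Fin n,
      ∫ y, fderiv ℝ (phi n) y (e i) * fderiv ℝ u (x₀ + ε • y) (e i)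
        = -∫ y, phi n y * fderiv ℝ (fun y => fderiv ℝ u (x₀ + ε • y) (e i)) y (e i) := by
    intro i
    have := integral_mul_fderiv_eq_neg_fderiv_mul_of_integrable (hInt1 i) (hInt2 i) (hInt3 i)
      (fun y _ => differentiable_phi y) (fun y _ => (Gi_hasFDerivAt u x₀ ε hu (e i) y).differentiableAt)
    linarith [this]
  -- pointwise decomposition of the integrand
  have hpt : ∀ y, fderiv ℝ u (x₀ + ε • y) y * rho n y
      = ∑ i : Fin n, fderiv ℝ (phi n) y (e i) * fderiv ℝ u (x₀ + ε • y) (e i) := by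
    intro y
    have h1 : ∀ i : Fin n, fderiv ℝ (phi n) y (e i) * fderiv ℝ u (x₀ + ε • y) (e i)
        = rho n y * fderiv ℝ u (x₀ + ε • y) (y i • e i) := by
      intro i
      rw [fderiv_phi_apply, ContinuousLinearMap.map_smul, smul_eq_mul]
      ring
    rw [Finset.sum_congr rfl fun i _ => h1 i, ← Finset.mul_sum,
      ← map_sum (fderiv ℝ u (x₀ + ε • y)) (fun i => y i • e i) Finset.univ,
      sum_single_smul]
    ring
  rw [integral_congr_ae (Filter.Eventually.of_forall hpt)]
  rw [integral_finset_sum _ fun i _ => hInt1 i]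
  rw [Finset.sum_congr rfl fun i _ => hibp i]
  -- now rewrite the second derivative terms and sum them into the laplacian
  have hsum2 : ∀ i : Fin n, ∫ y, phi n y * fderiv ℝ (fun y => fderiv ℝ u (x₀ + ε • y) (e i)) y (e i)
      = ∫ y, phi n y * (ε * fderiv ℝ (fderiv ℝ u) (x₀ + ε • y) (e i) (e i)) := by
    intro i
    refine integral_congr_ae (Filter.Eventually.of_forall fun y => ?_)
    simp only [Gi_fderiv_apply u x₀ ε hu]
  rw [Finset.sum_congr rfl fun i _ => congrArg Neg.neg (hsum2 i)]
  have hIntlap : ∀ i : Fin n, Integrable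
      (fun y => phi n y * (ε * fderiv ℝ (fderiv ℝ u) (x₀ + ε • y) (e i) (e i))) := by
    intro i
    refine (continuous_phi.mul (continuous_const.mul
      ((hD2c.clm_apply continuous_const).clm_apply
        continuous_const))).integrable_of_hasCompactSupport hcs_phi.mul_right
  rw [Finset.sum_neg_distrib, ← integral_finset_sum _ fun i _ => hIntlap i]
  refine congrArg Neg.neg ?_
  have : ∀ y, ∑ i : Fin n, phi n y * (ε * fderiv ℝ (fderiv ℝ u) (x₀ + ε • y) (e i) (e i))
      = ε * (phi n y * laplacian u (x₀ + ε • y)) := by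
    intro y
    rw [lap_eq, Finset.mul_sum, Finset.mul_sum]
    refine Finset.sum_congr rfl fun i _ => by ring
  rw [integral_congr_ae (Filter.Eventually.of_forall this), integral_const_mul]

end IBP2

section MVI

variable (u : EuclideanSpace ℝ (Fin n) → ℝ) (x₀ : EuclideanSpace ℝ (Fin n))
variable (hu : ContDiff ℝ (⊤ : ℕ∞) u)
include hu

lemma F_hasDerivAt (ε : ℝ) :
    HasDerivAt (fun e : ℝ => ∫ y, u (x₀ + e • y) * rho n y)
      (∫ y, fderiv ℝ u (x₀ + ε • y) y * rho n y) ε := by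
  have hD1c : Continuous (fderiv ℝ u) := (hu.fderiv_right (m := (⊤ : ℕ∞)) (by simp)).continuous
  obtain ⟨C, hC⟩ := (isCompact_closedBall (0 : EuclideanSpace ℝ (Fin n))
    (‖x₀‖ + |ε| + 2)).exists_bound_of_continuousOn hD1c.continuousOn
  have h1 : ∀ᶠ e in 𝓝 ε, AEStronglyMeasurable
      (fun y => u (x₀ + e • y) * rho n y) volume :=
    Filter.Eventually.of_forall fun e =>
      ((hu.continuous.comp (affine_continuous x₀ e)).mul continuous_rho).aestronglyMeasurable
  have h2 : Integrable (fun y => u (x₀ + ε • y) * rho n y) :=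
    ((hu.continuous.comp (affine_continuous x₀ ε)).mul
      continuous_rho).integrable_of_hasCompactSupport hcs_rho.mul_left
  have h3 : AEStronglyMeasurable (fun y => fderiv ℝ u (x₀ + ε • y) y * rho n y) volume :=
    (((hD1c.comp (affine_continuous x₀ ε)).clm_apply continuous_id).mul
      continuous_rho).aestronglyMeasurable
  have h4 : ∀ᵐ y : EuclideanSpace ℝ (Fin n), ∀ e ∈ ball ε 1,
      ‖fderiv ℝ u (x₀ + e • y) y * rho n y‖ ≤ (max C 0 + 1) * rho n y := by
    refine Filter.Eventually.of_forall fun y => fun e he => ?_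
    rcases le_or_gt ‖y‖ 1 with hy | hy
    · have hz : x₀ + e • y ∈ closedBall (0 : EuclideanSpace ℝ (Fin n)) (‖x₀‖ + |ε| + 2) := by
        have h5 : |e| ≤ |ε| + 1 := by
          have := mem_ball_iff_norm.1 he
          have := abs_sub_abs_le_abs_sub e ε
          rw [Real.norm_eq_abs] at *
          linarith
        have : ‖x₀ + e • y‖ ≤ ‖x₀‖ + |e| * ‖y‖ := by
          calc ‖x₀ + e • y‖ ≤ ‖x₀‖ + ‖e • y‖ := norm_add_le _ _
          _ = ‖x₀‖ + |e| * ‖y‖ := by rw [norm_smul, Real.norm_eq_abs]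
        have hey : |e| * ‖y‖ ≤ (|ε| + 1) * 1 :=
          mul_le_mul h5 hy (norm_nonneg y) (by positivity)
        simp only [mem_closedBall, dist_zero_right]
        linarith
      have hb : ‖fderiv ℝ u (x₀ + e • y) y‖ ≤ max C 0 + 1 := by
        calc ‖fderiv ℝ u (x₀ + e • y) y‖ ≤ ‖fderiv ℝ u (x₀ + e • y)‖ * ‖y‖ :=
          (fderiv ℝ u (x₀ + e • y)).le_opNorm y
        _ ≤ (max C 0 + 1) * 1 := by
            apply mul_le_mul _ hy (norm_nonneg y) (by positivity)
            have := hC _ hz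
            have : C ≤ max C 0 := le_max_left _ _
            linarith [hC _ hz]
        _ = max C 0 + 1 := mul_one _
      rw [norm_mul, Real.norm_eq_abs (rho n y), abs_of_nonneg (rho_nonneg y)]
      exact mul_le_mul_of_nonneg_right hb (rho_nonneg y)
    · rw [rho_eq_zero hy.le]
      simp
  have h5 : Integrable (fun y : EuclideanSpace ℝ (Fin n) => (max C 0 + 1) * rho n y) :=
    integrable_rho.const_mul _
  have h6 : ∀ᵐ y : EuclideanSpace ℝ (Fin n), ∀ e ∈ ball ε 1,
      HasDerivAt (fun e : ℝ => u (x₀ + e • y) * rho n y)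
        (fderiv ℝ u (x₀ + e • y) y * rho n y) e := by
    refine Filter.Eventually.of_forall fun y => fun e _ => ?_
    have ha : HasDerivAt (fun e : ℝ => x₀ + e • y) y e := by
      simpa using ((hasDerivAt_id e).smul_const y).const_add x₀
    have hcomp := (hu.differentiable (by simp) (x₀ + e • y)).hasFDerivAt.comp_hasDerivAt e ha
    exact hcomp.mul_const (rho n y)
  exact (hasDerivAt_integral_of_dominated_loc_of_deriv_le (ball_mem_nhds ε one_pos) h1 h2 h3 h4 h5 h6).2

lemma mvi0 (hu0 : ∀ x, 0 ≤ u x) (r K : ℝ) (hr : 0 < r)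
    (hK : ∀ y ∈ closedBall x₀ r, -K ≤ laplacian u y) :
    u x₀ * c1 n ≤ (r ^ n)⁻¹ * (∫ y in closedBall x₀ r, u y) + K * c2 n / 2 * r ^ 2 := by
  set F := fun e : ℝ => ∫ y, u (x₀ + e • y) * rho n y with hFdef
  set g := fun e : ℝ => F e + K * c2 n / 2 * e ^ 2 with hgdef
  have hg : ∀ e : ℝ, HasDerivAt g
      ((∫ y, fderiv ℝ u (x₀ + e • y) y * rho n y) + K * c2 n / 2 * (2 * e)) e := by
    intro e
    have h1 := F_hasDerivAt u x₀ hu e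
    have h2 : HasDerivAt (fun e : ℝ => K * c2 n / 2 * e ^ 2) (K * c2 n / 2 * (2 * e)) e := by
      simpa using (hasDerivAt_pow 2 e).const_mul (K * c2 n / 2)
    exact h1.add h2
  have hgmono : MonotoneOn g (Icc 0 r) := by
    apply monotoneOn_of_deriv_nonneg (convex_Icc 0 r)
    · have : Continuous g := by
        rw [continuous_iff_continuousAt]
        exact fun e => (hg e).differentiableAt.continuousAt
      exact this.continuousOn
    · exact fun e _ => (hg e).differentiableAt.differentiableWithinAt
    · intro e he
      rw [interior_Icc] at he
      rw [(hg e).deriv]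
      rw [ibp_key u x₀ e hu]
      have hple : ∀ y, phi n y * laplacian u (x₀ + e • y) ≤ K * (-phi n y) := by
        intro y
        rcases le_or_gt 1 ‖y‖ with h | h
        · rw [phi_eq_zero h]; simp
        · have hz : x₀ + e • y ∈ closedBall x₀ r := by
            simp only [mem_closedBall, dist_eq_norm]
            have : ‖x₀ + e • y - x₀‖ = |e| * ‖y‖ := by
              rw [add_sub_cancel_left, norm_smul, Real.norm_eq_abs]
            rw [this, abs_of_pos he.1]
            nlinarith [he.2, he.1, norm_nonneg y]
          have hlap := hK _ hz
          have hphi := phi_nonpos (n := n) y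
          nlinarith
      have hInt1 : Integrable (fun y => phi n y * laplacian u (x₀ + e • y)) :=
        (continuous_phi.mul ((lap_continuous u hu).comp
          (affine_continuous x₀ e))).integrable_of_hasCompactSupport hcs_phi.mul_right
      have hInt2 : Integrable (fun y : EuclideanSpace ℝ (Fin n) => K * (-phi n y)) :=
        integrable_neg_phi.const_mul K
      have hint := integral_mono hInt1 hInt2 hple
      rw [integral_const_mul] at hint
      have hc2 : (∫ y : EuclideanSpace ℝ (Fin n), -phi n y) = c2 n := rfl
      rw [hc2] at hint
      nlinarith [he.1]
  have hg0r : g 0 ≤ g r := hgmono ⟨le_refl 0, hr.le⟩ ⟨hr.le, le_refl r⟩ hr.le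
  have hF0 : F 0 = u x₀ * c1 n := by
    have : (fun y : EuclideanSpace ℝ (Fin n) => u (x₀ + (0:ℝ) • y) * rho n y)
        = fun y => u x₀ * rho n y := by
      funext y; rw [zero_smul, add_zero]
    rw [hFdef]
    simp only [this]
    rw [integral_const_mul]
    rfl
  have hFr : F r ≤ (r ^ n)⁻¹ * ∫ y in closedBall x₀ r, u y := by
    set k := (closedBall x₀ r).indicator u with hk
    have hkeq : (fun y : EuclideanSpace ℝ (Fin n) => k (x₀ + r • y))
        = (closedBall (0 : EuclideanSpace ℝ (Fin n)) 1).indicator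
            (fun y => u (x₀ + r • y)) := by
      funext y
      have hiff : x₀ + r • y ∈ closedBall x₀ r ↔ y ∈ closedBall (0 : EuclideanSpace ℝ (Fin n)) 1 := by
        simp only [mem_closedBall, dist_eq_norm, add_sub_cancel_left, sub_zero, norm_smul,
          Real.norm_eq_abs, abs_of_pos hr]
        constructor
        · intro h; nlinarith [norm_nonneg y]
        · intro h; nlinarith [norm_nonneg y]
      by_cases hy : y ∈ closedBall (0 : EuclideanSpace ℝ (Fin n)) 1
      · rw [hk, indicator_of_mem (hiff.2 hy), indicator_of_mem hy]
      · rw [hk, indicator_of_notMem (fun h => hy (hiff.1 h)), indicator_of_notMem hy]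
    have hki : Integrable (fun y => k (x₀ + r • y)) := by
      rw [hkeq]
      rw [integrable_indicator_iff measurableSet_closedBall]
      exact ((hu.continuous.comp (affine_continuous x₀ r)).continuousOn).integrableOn_compact
        (isCompact_closedBall _ _)
    have hFrInt : Integrable (fun y => u (x₀ + r • y) * rho n y) :=
      ((hu.continuous.comp (affine_continuous x₀ r)).mul
        continuous_rho).integrable_of_hasCompactSupport hcs_rho.mul_left
    have hmono2 : ∀ y, u (x₀ + r • y) * rho n y ≤ k (x₀ + r • y) := by
      intro y
      by_cases hy : ‖y‖ ≤ 1
      · have hmem : x₀ + r • y ∈ closedBall x₀ r := by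
          simp only [mem_closedBall, dist_eq_norm, add_sub_cancel_left, norm_smul,
            Real.norm_eq_abs, abs_of_pos hr]
          nlinarith [norm_nonneg y]
        rw [hk, indicator_of_mem hmem]
        nlinarith [rho_le_one y, rho_nonneg y, hu0 (x₀ + r • y)]
      · rw [rho_eq_zero (not_le.1 hy).le, mul_zero]
        exact indicator_nonneg (fun z _ => hu0 z) _
    have h1 : F r ≤ ∫ y, k (x₀ + r • y) := integral_mono hFrInt hki hmono2
    have h2 : (∫ y, k (x₀ + r • y)) = (r ^ n)⁻¹ * ∫ y in closedBall x₀ r, u y := by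
      have hcs := Measure.integral_comp_smul (volume) (fun z => k (x₀ + z)) r
      simp only [smul_eq_mul] at hcs
      have hfr : Module.finrank ℝ (EuclideanSpace ℝ (Fin n)) = n := finrank_euclideanSpace_fin
      rw [hfr] at hcs
      rw [abs_of_nonneg (inv_nonneg.2 (pow_nonneg hr.le n))] at hcs
      calc (∫ y, k (x₀ + r • y)) = (r ^ n)⁻¹ * ∫ z, k (x₀ + z) := hcs
      _ = (r ^ n)⁻¹ * ∫ y in closedBall x₀ r, u y := by
          rw [integral_add_left_eq_self k x₀, hk, integral_indicator measurableSet_closedBall]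
    linarith
  have h3 : g r = F r + K * c2 n / 2 * r ^ 2 := rfl
  have h4 : g 0 = F 0 := by
    show F 0 + K * c2 n / 2 * (0:ℝ) ^ 2 = F 0
    ring
  calc u x₀ * c1 n = F 0 := hF0.symm
  _ = g 0 := h4.symm
  _ ≤ g r := hg0r
  _ = F r + K * c2 n / 2 * r ^ 2 := h3
  _ ≤ (r ^ n)⁻¹ * (∫ y in closedBall x₀ r, u y) + K * c2 n / 2 * r ^ 2 := by linarith

end MVI


section Step

/-- normalized MVI constant `1/c₁` -/
noncomputable def Cc1 (n : ℕ) : ℝ := (c1 n)⁻¹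

/-- normalized MVI constant `c₂/(2c₁)` -/
noncomputable def Cc2 (n : ℕ) : ℝ := c2 n / (2 * c1 n)

lemma Cc1_pos : 0 < Cc1 n := inv_pos.2 c1_pos

lemma Cc2_pos : 0 < Cc2 n := div_pos c2_pos (by linarith [c1_pos (n := n)])

/-- smallness threshold for the ε-regularity -/
noncomputable def eps0 (n : ℕ) (a : ℝ) : ℝ :=
  (2 * Cc1 n)⁻¹ * (min ((24 * a * Cc2 n)⁻¹) 1) ^ ((n : ℝ) / 2)

lemma eps0_pos {a : ℝ} (ha : 0 < a) : 0 < eps0 n a := by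
  apply mul_pos (inv_pos.2 (by linarith [Cc1_pos (n := n)]))
  apply Real.rpow_pos_of_pos
  refine lt_min (inv_pos.2 ?_) one_pos
  have := Cc2_pos (n := n)
  positivity

/-- the normalized mean value inequality -/
lemma mvi (u : EuclideanSpace ℝ (Fin n) → ℝ) (x₀ : EuclideanSpace ℝ (Fin n))
    (hu : ContDiff ℝ (⊤ : ℕ∞) u) (hu0 : ∀ x, 0 ≤ u x) (r K : ℝ) (hr : 0 < r)
    (hK : ∀ y ∈ closedBall x₀ r, -K ≤ laplacian u y) :
    u x₀ ≤ Cc1 n * ((r ^ n)⁻¹ * ∫ y in closedBall x₀ r, u y) + Cc2 n * K * r ^ 2 := by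
  have h := mvi0 u x₀ hu hu0 r K hr hK
  have hc := c1_pos (n := n)
  rw [show u x₀ = u x₀ * c1 n / c1 n by field_simp]
  rw [div_le_iff₀ hc]
  calc u x₀ * c1 n ≤ (r ^ n)⁻¹ * (∫ y in closedBall x₀ r, u y) + K * c2 n / 2 * r ^ 2 := h
  _ = (Cc1 n * ((r ^ n)⁻¹ * ∫ y in closedBall x₀ r, u y) + Cc2 n * K * r ^ 2) * c1 n := by
      rw [Cc1, Cc2]
      field_simp

variable {a : ℝ} {f : EuclideanSpace ℝ (Fin n) → ℝ}

set_option maxHeartbeats 1000000 in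
lemma step (hn1 : 1 ≤ n) (hn4 : n ≤ 4)
    (hf : ContDiff ℝ (⊤ : ℕ∞) f) (hf0 : ∀ x, 0 ≤ f x) (ha : 0 < a)
    (hΔ : ∀ x, -(a * (f x + f x ^ (3 / 2 : ℝ))) ≤ laplacian f x)
    (x : EuclideanSpace ℝ (Fin n)) (hM : 1 ≤ f x)
    (hmass : ∫ y in closedBall x ((2 * Cc1 n * eps0 n a / f x) ^ ((n : ℝ)⁻¹)), f y
      ≤ eps0 n a) :
    ∃ x', dist x' x ≤ (2 * Cc1 n * eps0 n a / f x) ^ ((n : ℝ)⁻¹) ∧ 2 * f x ≤ f x' := by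
  have hn0 : (n : ℝ) ≠ 0 := Nat.cast_ne_zero.2 (by omega)
  have hncast : (0:ℝ) < n := by
    have : (1:ℝ) ≤ n := by exact_mod_cast hn1
    linarith
  have hC1 := Cc1_pos (n := n)
  have hC2 := Cc2_pos (n := n)
  have he0 := eps0_pos (n := n) ha
  set ε₀ := eps0 n a with he
  set M := f x with hMdef
  have hM0 : (0:ℝ) < M := lt_of_lt_of_le one_pos hM
  set A := 2 * Cc1 n * ε₀ with hA
  have hA0 : 0 < A := by rw [hA]; have := he0; positivity
  set t := A / M with ht
  have ht0 : 0 < t := div_pos hA0 hM0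
  set r := t ^ ((n:ℝ)⁻¹) with hrdef
  have hr : 0 < r := Real.rpow_pos_of_pos ht0 _
  obtain ⟨x', hx'mem, hx'max⟩ := (isCompact_closedBall x r).exists_isMaxOn
    ⟨x, mem_closedBall_self hr.le⟩ hf.continuous.continuousOn
  refine ⟨x', mem_closedBall.1 hx'mem, ?_⟩
  by_contra hcon
  push_neg at hcon
  set S := f x' with hSdef
  have hMS : M ≤ S := hx'max (mem_closedBall_self hr.le)
  have hS1 : (1:ℝ) ≤ S := le_trans hM hMS
  have hS0 : (0:ℝ) < S := lt_of_lt_of_le one_pos hS1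
  set K := a * (S + S ^ (3/2:ℝ)) with hKdef
  have hlapK : ∀ y ∈ closedBall x r, -K ≤ laplacian f y := by
    intro y hy
    have h1 := hΔ y
    have h2 : f y ≤ S := hx'max hy
    have h3 : f y ^ (3/2:ℝ) ≤ S ^ (3/2:ℝ) := Real.rpow_le_rpow (hf0 y) h2 (by norm_num)
    have h4 : a * (f y + f y ^ (3/2:ℝ)) ≤ K := by
      rw [hKdef]
      apply mul_le_mul_of_nonneg_left _ ha.le
      linarith
    linarith
  have hmvi := mvi f x hf hf0 r K hr hlapK
  have hrn : r ^ n = t := by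
    rw [hrdef, ← Real.rpow_natCast (t ^ ((n:ℝ)⁻¹)) n, ← Real.rpow_mul ht0.le,
      inv_mul_cancel₀ hn0, Real.rpow_one]
  have hintnn : Cc1 n * ((r ^ n)⁻¹ * ∫ y in closedBall x r, f y) ≤ M / 2 := by
    rw [hrn]
    have h2 : t⁻¹ * (∫ y in closedBall x r, f y) ≤ t⁻¹ * ε₀ :=
      mul_le_mul_of_nonneg_left hmass (inv_nonneg.2 ht0.le)
    have h3 : Cc1 n * (t⁻¹ * ε₀) = M / 2 := by
      rw [ht, hA]
      field_simp
    calc Cc1 n * (t⁻¹ * ∫ y in closedBall x r, f y) ≤ Cc1 n * (t⁻¹ * ε₀) :=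
      mul_le_mul_of_nonneg_left h2 hC1.le
    _ = M / 2 := h3
  have hhalf : M / 2 ≤ Cc2 n * K * r ^ 2 := by linarith
  have h2_32 : ((2:ℝ)) ^ (3/2:ℝ) ≤ 3 := by
    have h1 : (((2:ℝ)) ^ (3/2:ℝ)) ^ (2:ℕ) = 8 := by
      rw [← Real.rpow_natCast (((2:ℝ)) ^ (3/2:ℝ)) 2, ← Real.rpow_mul (by norm_num)]
      norm_num
    nlinarith [Real.rpow_nonneg (by norm_num : (0:ℝ) ≤ 2) (3/2:ℝ)]
  have hS32 : S ^ (3/2:ℝ) ≤ 3 * M ^ (3/2:ℝ) := by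
    have h1 : S ^ (3/2:ℝ) ≤ (2*M) ^ (3/2:ℝ) := Real.rpow_le_rpow hS0.le hcon.le (by norm_num)
    have h2 : (2*M) ^ (3/2:ℝ) = 2 ^ (3/2:ℝ) * M ^ (3/2:ℝ) := Real.mul_rpow (by norm_num) hM0.le
    have h3 : (0:ℝ) ≤ M ^ (3/2:ℝ) := Real.rpow_nonneg hM0.le _
    nlinarith
  have hSle : S ≤ S ^ (3/2:ℝ) := by
    nth_rewrite 1 [← Real.rpow_one S]
    exact Real.rpow_le_rpow_of_exponent_le hS1 (by norm_num)
  have hKle : K ≤ 6 * a * M ^ (3/2:ℝ) := by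
    rw [hKdef]
    nlinarith [Real.rpow_nonneg hS0.le (3/2:ℝ)]
  set eexp := (n:ℝ)⁻¹ * 2 with heexp
  have hr2 : r ^ 2 = A ^ eexp / M ^ eexp := by
    rw [hrdef, ← Real.rpow_natCast (t ^ ((n:ℝ)⁻¹)) 2, ← Real.rpow_mul ht0.le,
      ht, Real.div_rpow hA0.le hM0.le]
    norm_num
    rfl
  have hAe : A ^ eexp ≤ (24 * a * Cc2 n)⁻¹ := by
    have hAval : A = (min ((24 * a * Cc2 n)⁻¹) 1) ^ ((n : ℝ) / 2) := by
      rw [hA, he, eps0, ← mul_assoc,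
        mul_inv_cancel₀ (by linarith [Cc1_pos (n := n)] : (2 * Cc1 n : ℝ) ≠ 0), one_mul]
    have hmpos : 0 < min ((24 * a * Cc2 n)⁻¹) 1 := by
      refine lt_min (inv_pos.2 ?_) one_pos
      positivity
    rw [hAval, ← Real.rpow_mul hmpos.le]
    have hexp1 : (n:ℝ)/2 * eexp = 1 := by
      rw [heexp]
      field_simp
    rw [hexp1, Real.rpow_one]
    exact min_le_left _ _
  have hPQ : M ^ (1/2:ℝ) ≤ M ^ eexp := by
    apply Real.rpow_le_rpow_of_exponent_le hM
    rw [heexp]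
    have hn4' : (n:ℝ) ≤ 4 := by exact_mod_cast hn4
    rw [show (n:ℝ)⁻¹ * 2 = 2 / n by ring, le_div_iff₀ hncast]
    linarith
  have hQ0 : 0 < M ^ eexp := Real.rpow_pos_of_pos hM0 _
  have hM32eq : M ^ (3/2:ℝ) = M * M ^ (1/2:ℝ) := by
    rw [show (3/2:ℝ) = 1 + 1/2 by norm_num, Real.rpow_add hM0, Real.rpow_one]
  have hmain : M / 2 ≤ Cc2 n * (6 * a * M ^ (3/2:ℝ)) * (A ^ eexp / M ^ eexp) := by
    calc M/2 ≤ Cc2 n * K * r ^ 2 := hhalf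
    _ ≤ Cc2 n * (6 * a * M ^ (3/2:ℝ)) * (A ^ eexp / M ^ eexp) := by
        rw [hr2]
        apply mul_le_mul_of_nonneg_right _ (by positivity)
        exact mul_le_mul_of_nonneg_left hKle hC2.le
  rw [hM32eq] at hmain
  have hmain2 : M / 2 * M ^ eexp ≤ Cc2 n * (6*a*(M * M^(1/2:ℝ))) * A ^ eexp := by
    rw [show Cc2 n * (6*a*(M * M^(1/2:ℝ))) * (A ^ eexp / M ^ eexp)
      = Cc2 n * (6*a*(M * M^(1/2:ℝ))) * A ^ eexp / M ^ eexp by ring] at hmain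
    exact (le_div_iff₀ hQ0).1 hmain
  have hPA : M ^ (1/2:ℝ) * A ^ eexp ≤ M ^ eexp * (24 * a * Cc2 n)⁻¹ :=
    mul_le_mul hPQ hAe (Real.rpow_nonneg hA0.le _) hQ0.le
  have hfin : Cc2 n * (6*a*(M * M^(1/2:ℝ))) * A ^ eexp ≤ M * M ^ eexp / 4 := by
    calc Cc2 n * (6*a*(M * M^(1/2:ℝ))) * A ^ eexp
        = 6 * a * Cc2 n * M * (M^(1/2:ℝ) * A ^ eexp) := by ring
    _ ≤ 6 * a * Cc2 n * M * (M ^ eexp * (24 * a * Cc2 n)⁻¹) := by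
        apply mul_le_mul_of_nonneg_left hPA (by positivity)
    _ = M * M ^ eexp / 4 := by
        field_simp
        ring
  nlinarith [hQ0, hM0, le_trans hmain2 hfin]

end Step

section Iterate

/-- geometric decay ratio -/
noncomputable def qq (n : ℕ) : ℝ := (2:ℝ) ^ (-(n:ℝ)⁻¹)

/-- threshold constant for the ε-regularity -/
noncomputable def M1 (n : ℕ) (a : ℝ) : ℝ :=
  max 1 (2 * Cc1 n * eps0 n a / (1 - qq n) ^ n)

lemma qq_pos : 0 < qq n := Real.rpow_pos_of_pos (by norm_num) _

lemma qq_lt_one (hn1 : 1 ≤ n) : qq n < 1 := by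
  apply Real.rpow_lt_one_of_one_lt_of_neg (by norm_num)
  have h : (0:ℝ) < (n:ℝ)⁻¹ := inv_pos.2 (by exact_mod_cast Nat.pos_of_ne_zero (by omega))
  linarith

lemma M1_ge_one {a : ℝ} : 1 ≤ M1 n a := le_max_left _ _

variable {a : ℝ} {f : EuclideanSpace ℝ (Fin n) → ℝ}

lemma eps_reg (hn1 : 1 ≤ n) (hn4 : n ≤ 4)
    (hf : ContDiff ℝ (⊤ : ℕ∞) f) (hf0 : ∀ x, 0 ≤ f x) (ha : 0 < a)
    (hΔ : ∀ x, -(a * (f x + f x ^ (3 / 2 : ℝ))) ≤ laplacian f x)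
    (hL1 : Integrable f)
    (x₀ : EuclideanSpace ℝ (Fin n))
    (hmass : ∫ y in closedBall x₀ 2, f y ≤ eps0 n a) :
    f x₀ ≤ M1 n a := by
  by_contra hcon
  push_neg at hcon
  have hn0 : (n : ℝ) ≠ 0 := Nat.cast_ne_zero.2 (by omega)
  have hq0 := qq_pos (n := n)
  have hq1 := qq_lt_one (n := n) hn1
  have he0 := eps0_pos (n := n) ha
  have hC1 := Cc1_pos (n := n)
  have hM1pos : (0:ℝ) < M1 n a := lt_of_lt_of_le one_pos M1_ge_one
  have hM1key : 2 * Cc1 n * eps0 n a / M1 n a ≤ (1 - qq n) ^ n := by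
    rw [div_le_iff₀ hM1pos]
    have h1 : 2 * Cc1 n * eps0 n a / (1 - qq n) ^ n ≤ M1 n a := le_max_right _ _
    have h2 : (0:ℝ) < (1 - qq n) ^ n := pow_pos (by linarith) n
    calc 2 * Cc1 n * eps0 n a
        = (2 * Cc1 n * eps0 n a / (1 - qq n) ^ n) * (1 - qq n) ^ n := by field_simp
    _ ≤ M1 n a * (1 - qq n) ^ n := mul_le_mul_of_nonneg_right h1 h2.le
    _ = (1 - qq n) ^ n * M1 n a := by ring
  have key : ∀ k : ℕ, ∃ x, dist x x₀ ≤ 1 - qq n ^ k ∧ 2 ^ k * M1 n a ≤ f x := by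
    intro k
    induction k with
    | zero => exact ⟨x₀, by simp, by simpa using hcon.le⟩
    | succ k ih =>
      obtain ⟨x, hxd, hxf⟩ := ih
      have h2k : (1:ℝ) ≤ 2 ^ k := one_le_pow₀ (by norm_num)
      have hfx1 : 1 ≤ f x := by nlinarith [M1_ge_one (n := n) (a := a)]
      have hfx0 : (0:ℝ) < f x := lt_of_lt_of_le one_pos hfx1
      have hqk : (0:ℝ) < qq n ^ k := pow_pos hq0 k
      have hqk1 : qq n ^ k ≤ 1 := pow_le_one₀ hq0.le hq1.le
      have hbase : 2 * Cc1 n * eps0 n a / f x ≤ (1 - qq n) ^ n * ((2:ℝ) ^ k)⁻¹ := by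
        have hpos : (0:ℝ) < 2 ^ k * M1 n a := by positivity
        calc 2 * Cc1 n * eps0 n a / f x
            ≤ 2 * Cc1 n * eps0 n a / (2 ^ k * M1 n a) :=
              div_le_div_of_nonneg_left (by positivity) hpos hxf
        _ = (2 * Cc1 n * eps0 n a / M1 n a) * ((2:ℝ) ^ k)⁻¹ := by
              field_simp
        _ ≤ (1 - qq n) ^ n * ((2:ℝ) ^ k)⁻¹ :=
              mul_le_mul_of_nonneg_right hM1key (by positivity)
      have h3 : ((1 - qq n) ^ n) ^ ((n:ℝ)⁻¹) = 1 - qq n := by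
        rw [← Real.rpow_natCast (1 - qq n) n, ← Real.rpow_mul (by linarith : (0:ℝ) ≤ 1 - qq n),
          mul_inv_cancel₀ hn0, Real.rpow_one]
      have h4 : (((2:ℝ) ^ k)⁻¹) ^ ((n:ℝ)⁻¹) = qq n ^ k := by
        rw [← Real.rpow_natCast (2:ℝ) k, ← Real.rpow_neg (by norm_num : (0:ℝ) ≤ 2),
          ← Real.rpow_mul (by norm_num : (0:ℝ) ≤ 2), ← Real.rpow_natCast (qq n) k, qq,
          ← Real.rpow_mul (by norm_num : (0:ℝ) ≤ 2)]
        congr 1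
        ring
      have hrr_le : (2 * Cc1 n * eps0 n a / f x) ^ ((n:ℝ)⁻¹) ≤ (1 - qq n) * qq n ^ k := by
        calc (2 * Cc1 n * eps0 n a / f x) ^ ((n:ℝ)⁻¹)
            ≤ ((1 - qq n) ^ n * ((2:ℝ) ^ k)⁻¹) ^ ((n:ℝ)⁻¹) :=
              Real.rpow_le_rpow (by positivity) hbase (inv_nonneg.2 (Nat.cast_nonneg n))
        _ = ((1 - qq n) ^ n) ^ ((n:ℝ)⁻¹) * (((2:ℝ) ^ k)⁻¹) ^ ((n:ℝ)⁻¹) :=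
              Real.mul_rpow (pow_nonneg (by linarith) n) (by positivity)
        _ = (1 - qq n) * qq n ^ k := by rw [h3, h4]
      have hrr1 : (2 * Cc1 n * eps0 n a / f x) ^ ((n:ℝ)⁻¹) ≤ 1 := by
        nlinarith [hrr_le, hq0, hq1, hqk, hqk1]
      have hsub : closedBall x ((2 * Cc1 n * eps0 n a / f x) ^ ((n:ℝ)⁻¹))
          ⊆ closedBall x₀ 2 := by
        intro y hy
        have h5 := mem_closedBall.1 hy
        refine mem_closedBall.2 ?_
        have h7 := dist_triangle y x x₀
        have h8 := hrr_le
        have h9 : dist y x ≤ (1 - qq n) * qq n ^ k := le_trans h5 hrr_le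
        nlinarith [hqk, hqk1, hq0, hq1]
      have hmass2 : ∫ y in closedBall x ((2 * Cc1 n * eps0 n a / f x) ^ ((n:ℝ)⁻¹)), f y
          ≤ eps0 n a :=
        le_trans (setIntegral_mono_set hL1.integrableOn
          (Filter.Eventually.of_forall hf0) (HasSubset.Subset.eventuallyLE hsub)) hmass
      obtain ⟨x', hd, hgrow⟩ := step hn1 hn4 hf hf0 ha hΔ x hfx1 hmass2
      refine ⟨x', ?_, ?_⟩
      · calc dist x' x₀ ≤ dist x' x + dist x x₀ := dist_triangle _ _ _
        _ ≤ (1 - qq n) * qq n ^ k + (1 - qq n ^ k) := add_le_add (le_trans hd hrr_le) hxd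
        _ = 1 - qq n ^ (k+1) := by rw [pow_succ]; ring
      · calc (2:ℝ) ^ (k+1) * M1 n a = 2 * (2 ^ k * M1 n a) := by ring
        _ ≤ 2 * f x := by linarith
        _ ≤ f x' := hgrow
  obtain ⟨B, hB⟩ := (isCompact_closedBall x₀ 1).exists_bound_of_continuousOn
    hf.continuous.continuousOn
  obtain ⟨k, hk⟩ := pow_unbounded_of_one_lt (B / M1 n a) (by norm_num : (1:ℝ) < 2)
  obtain ⟨x, hxd, hxf⟩ := key k
  have hx1 : x ∈ closedBall x₀ 1 := by
    have h8 : (0:ℝ) ≤ qq n ^ k := (pow_pos (qq_pos (n := n)) k).le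
    exact mem_closedBall.2 (by linarith)
  have hfB : f x ≤ B := le_trans (le_abs_self _) (by
    simpa [Real.norm_eq_abs] using hB x hx1)
  have hBk : B < 2 ^ k * M1 n a := by
    rw [div_lt_iff₀ hM1pos] at hk
    linarith
  linarith

lemma bounded (hn1 : 1 ≤ n) (hn4 : n ≤ 4)
    (hf : ContDiff ℝ (⊤ : ℕ∞) f) (hf0 : ∀ x, 0 ≤ f x) (ha : 0 < a)
    (hΔ : ∀ x, -(a * (f x + f x ^ (3 / 2 : ℝ))) ≤ laplacian f x)
    (hL1 : Integrable f) :
    ∃ Mb : ℝ, 0 < Mb ∧ ∀ x, f x ≤ Mb := by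
  have he0 := eps0_pos (n := n) ha
  have htot : Tendsto (fun kk : ℕ => ∫ y in closedBall (0 : EuclideanSpace ℝ (Fin n)) kk, f y)
      atTop (𝓝 (∫ y, f y)) := by
    have hU : ⋃ kk : ℕ, closedBall (0 : EuclideanSpace ℝ (Fin n)) (kk : ℝ) = univ := by
      ext y
      simp only [mem_iUnion, mem_closedBall, dist_zero_right, mem_univ, iff_true]
      exact exists_nat_ge ‖y‖
    have h := tendsto_setIntegral_of_monotone (fun kk : ℕ => measurableSet_closedBall)
      (fun i j hij => closedBall_subset_closedBall (Nat.cast_le.2 hij))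
      (by rw [hU]; exact hL1.integrableOn)
    rwa [hU, setIntegral_univ] at h
  have hev : ∀ᶠ kk : ℕ in atTop, (∫ y, f y) - eps0 n a
      < ∫ y in closedBall (0 : EuclideanSpace ℝ (Fin n)) kk, f y :=
    htot.eventually (eventually_gt_nhds (by linarith))
  obtain ⟨k0, hk0⟩ := hev.exists
  have htail : ∀ x : EuclideanSpace ℝ (Fin n), (k0:ℝ) + 3 ≤ ‖x‖ →
      ∫ y in closedBall x 2, f y ≤ eps0 n a := by
    intro x hx
    have hdisj : Disjoint (closedBall x (2:ℝ))
        (closedBall (0 : EuclideanSpace ℝ (Fin n)) (k0 : ℝ)) := by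
      apply closedBall_disjoint_closedBall
      rw [dist_zero_right]
      linarith
    have hun := setIntegral_union hdisj measurableSet_closedBall
      (hL1.integrableOn) (hL1.integrableOn) (f := f)
    have hle := setIntegral_le_integral
      (s := closedBall x 2 ∪ closedBall (0 : EuclideanSpace ℝ (Fin n)) (k0 : ℝ))
      hL1 (Filter.Eventually.of_forall hf0)
    rw [hun] at hle
    linarith
  obtain ⟨C, hC⟩ := (isCompact_closedBall (0 : EuclideanSpace ℝ (Fin n))
    ((k0:ℝ) + 3)).exists_bound_of_continuousOn hf.continuous.continuousOn
  refine ⟨max (M1 n a) C + 1, ?_, fun x => ?_⟩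
  · have h1 := M1_ge_one (n := n) (a := a)
    have h2 := le_max_left (M1 n a) C
    linarith
  rcases le_or_gt ‖x‖ ((k0:ℝ) + 3) with hx | hx
  · have h1 := hC x (by simpa [mem_closedBall, dist_zero_right] using hx)
    have h2 : f x ≤ C := le_trans (le_abs_self _) (by simpa [Real.norm_eq_abs] using h1)
    linarith [le_max_right (M1 n a) C]
  · have h1 := eps_reg hn1 hn4 hf hf0 ha hΔ hL1 x (htail x hx.le)
    linarith [le_max_left (M1 n a) C]

end Iterate


end Heinz

/-- Heinz trick / ε-regularity, integrability part of Lemma A.1(2): for `n ≤ 4` and a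
smooth nonnegative `f ∈ L¹(ℝⁿ)` with `Δf ≥ -a (f + f^{3/2})`, the function `f` lies in
`L^p(ℝⁿ)` for every `1 ≤ p ≤ ∞`, with `‖f‖_{L^p} ≤ C_f ‖f‖_{L¹}` for a constant `C_f > 0`
depending on `f`. -/

theorem heinz_Lp (n : ℕ) (hn : n ∈ ({1, 2, 3, 4} : Set ℕ))
    (f : EuclideanSpace ℝ (Fin n) → ℝ)
    (hf : ContDiff ℝ (⊤ : ℕ∞) f) (hf0 : ∀ x, 0 ≤ f x)
    (a : ℝ) (ha : 0 < a)
    (hΔ : ∀ x, -(a * (f x + f x ^ (3 / 2 : ℝ))) ≤ laplacian f x)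
    (hL1 : Integrable f) :
    (∀ p : ℝ≥0∞, 1 ≤ p → MemLp f p) ∧
      ∃ C : ℝ, 0 < C ∧ ∀ p : ℝ≥0∞, 1 ≤ p →
        eLpNorm f p volume ≤ ENNReal.ofReal C * eLpNorm f 1 volume := by
  have hn1 : 1 ≤ n := by
    simp only [Set.mem_insert_iff, Set.mem_singleton_iff] at hn
    rcases hn with rfl|rfl|rfl|rfl <;> norm_num
  have hn4 : n ≤ 4 := by
    simp only [Set.mem_insert_iff, Set.mem_singleton_iff] at hn
    rcases hn with rfl|rfl|rfl|rfl <;> norm_num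
  obtain ⟨Mb, hMb0, hMb⟩ := Heinz.bounded hn1 hn4 hf hf0 ha hΔ hL1
  have hmeas : AEStronglyMeasurable f volume := hf.continuous.aestronglyMeasurable
  set L := eLpNorm f 1 volume with hL
  have hLtop : L ≠ ⊤ := (memLp_one_iff_integrable.2 hL1).2.ne
  set Mr := max Mb 1 with hMr
  have hMr1 : (1:ℝ) ≤ Mr := le_max_right _ _
  have hbound : ∀ x, ‖f x‖ ≤ Mr := fun x => by
    rw [Real.norm_eq_abs, abs_of_nonneg (hf0 x)]
    exact le_trans (hMb x) (le_max_left _ _)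
  have htop : eLpNorm f ⊤ volume ≤ ENNReal.ofReal Mr := by
    rw [eLpNorm_exponent_top]
    exact eLpNormEssSup_le_of_ae_bound (Filter.Eventually.of_forall hbound)
  by_cases hL0 : L = 0
  · have hf_ae : f =ᵐ[volume] 0 := (eLpNorm_eq_zero_iff hmeas one_ne_zero).1 hL0
    constructor
    · intro p hp
      refine ⟨hmeas, ?_⟩
      rw [eLpNorm_congr_ae hf_ae, eLpNorm_zero]
      exact ENNReal.zero_lt_top
    · refine ⟨1, one_pos, fun p hp => ?_⟩
      rw [eLpNorm_congr_ae hf_ae, eLpNorm_zero]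
      simp
  · have hLpos : 0 < L := lt_of_le_of_ne (by simp) (Ne.symm hL0)
    set X := ENNReal.ofReal Mr with hX
    have hXtop : X ≠ ⊤ := ENNReal.ofReal_ne_top
    set D := max (X / L) 1 with hD
    have hD1 : (1:ℝ≥0∞) ≤ D := le_max_right _ _
    have hDtop : D ≠ ⊤ := by
      have h1 : X / L < ⊤ := ENNReal.div_lt_top hXtop hL0
      exact (max_lt h1 ENNReal.one_lt_top).ne
    have hkey : ∀ p : ℝ≥0∞, 1 ≤ p → eLpNorm f p volume ≤ D * L := by
      intro p hp
      by_cases hptop : p = ⊤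
      · rw [hptop]
        calc eLpNorm f ⊤ volume ≤ X := htop
        _ = X / L * L := (ENNReal.div_mul_cancel hL0 hLtop).symm
        _ ≤ D * L := mul_le_mul_left (le_max_left _ _) L
      · have hp0 : p ≠ 0 := by
          intro h
          rw [h] at hp
          exact absurd hp (by simp)
        set pt := p.toReal with hpt
        have hpt1 : 1 ≤ pt := by
          rw [hpt, ← ENNReal.toReal_one]
          exact ENNReal.toReal_mono hptop hp
        have hpt0 : 0 < pt := lt_of_lt_of_le one_pos hpt1
        have hptw : ∀ x, (‖f x‖₊ : ℝ≥0∞) ^ pt ≤ X ^ (pt - 1) * ‖f x‖₊ := by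
          intro x
          have hfx : (‖f x‖₊ : ℝ≥0∞) ≤ X := by
            rw [hX, ← enorm_eq_nnnorm, ← ofReal_norm]
            exact ENNReal.ofReal_le_ofReal (hbound x)
          calc (‖f x‖₊ : ℝ≥0∞) ^ pt
              = (‖f x‖₊ : ℝ≥0∞) ^ (pt - 1) * (‖f x‖₊ : ℝ≥0∞) ^ (1:ℝ) := by
                rw [← ENNReal.rpow_add_of_nonneg _ _ (by linarith) zero_le_one]
                norm_num
          _ ≤ X ^ (pt - 1) * ‖f x‖₊ := by
                rw [ENNReal.rpow_one]
                exact mul_le_mul' (ENNReal.rpow_le_rpow hfx (by linarith)) le_rfl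
        have hXpt_ne : X ^ (pt - 1) ≠ ⊤ := ENNReal.rpow_ne_top_of_nonneg (by linarith) hXtop
        have hchain : eLpNorm f p volume ≤ (X ^ (pt - 1) * L) ^ (1/pt) := by
          rw [eLpNorm_eq_lintegral_rpow_enorm_toReal hp0 hptop, ← hpt]
          apply ENNReal.rpow_le_rpow _ (by positivity)
          calc ∫⁻ x, (‖f x‖₊ : ℝ≥0∞) ^ pt ∂volume
              ≤ ∫⁻ x, X ^ (pt - 1) * ‖f x‖₊ ∂volume := lintegral_mono hptw
          _ = X ^ (pt - 1) * ∫⁻ x, (‖f x‖₊ : ℝ≥0∞) ∂volume := lintegral_const_mul' _ _ hXpt_ne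
          _ = X ^ (pt - 1) * L := by rw [hL, eLpNorm_one_eq_lintegral_enorm]; rfl
        have hsplit : (X ^ (pt - 1) * L) ^ (1/pt) = X ^ ((pt-1) * (1/pt)) * L ^ (1/pt) := by
          rw [ENNReal.mul_rpow_of_nonneg _ _ (by positivity), ← ENNReal.rpow_mul]
        have hs0 : 0 ≤ 1 - 1/pt := by
          have h2 : 1/pt ≤ 1 := by
            rw [div_le_one hpt0]
            exact hpt1
          linarith
        have hs1 : 1 - 1/pt ≤ 1 := by
          have h3 : (0:ℝ) ≤ 1/pt := by positivity
          linarith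
        have hXeq : (pt - 1) * (1/pt) = 1 - 1/pt := by field_simp
        have hfinal : X ^ ((pt-1) * (1/pt)) * L ^ (1/pt) ≤ D * L := by
          rw [hXeq]
          have hLsplit : L ^ (1/pt) = (L⁻¹) ^ (1 - 1/pt) * L := by
            have h := ENNReal.rpow_add (-(1 - 1/pt)) 1 hL0 hLtop
            rw [show -(1 - 1/pt) + 1 = 1/pt by ring] at h
            rw [h, ENNReal.rpow_neg, ← ENNReal.inv_rpow, ENNReal.rpow_one]
          rw [hLsplit, ← mul_assoc]
          refine mul_le_mul_left ?_ L
          rw [← ENNReal.mul_rpow_of_ne_top hXtop (ENNReal.inv_ne_top.2 hL0), ← div_eq_mul_inv]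
          calc (X / L) ^ (1 - 1/pt) ≤ D ^ (1 - 1/pt) :=
            ENNReal.rpow_le_rpow (le_max_left _ _) hs0
          _ ≤ D ^ (1:ℝ) := ENNReal.rpow_le_rpow_of_exponent_le hD1 hs1
          _ = D := ENNReal.rpow_one D
        exact le_trans (le_trans hchain (le_of_eq hsplit)) hfinal
    constructor
    · intro p hp
      exact ⟨hmeas, lt_of_le_of_lt (hkey p hp) (ENNReal.mul_lt_top hDtop.lt_top hLtop.lt_top)⟩
    · refine ⟨D.toReal + 1, by positivity, fun p hp => ?_⟩
      refine le_trans (hkey p hp) (mul_le_mul_left ?_ L)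
      calc D = ENNReal.ofReal D.toReal := (ENNReal.ofReal_toReal hDtop).symm
      _ ≤ ENNReal.ofReal (D.toReal + 1) := ENNReal.ofReal_le_ofReal (by linarith)
end

section
/- Let α ∈ (0,1). Let u : ℝ³ → [0,∞) be a smooth function with Δu ≥ 0 on ℝ³, and let g : ℝ³ → [0,∞) be a measurable function with g ∈ L^{3/(2(1−α))}(ℝ³) and |∇u(x)|² ≤ 4·u(x)·g(x) for every x ∈ ℝ³. Then there exists a constant C > 0, depending only on α and ‖g‖_{L^{3/(2(1−α))}(ℝ³)}, such that sup_{B_r} u ≤ C·(u(0) + r^{2α}) for every r ≥ 1. In particular u(x) = O(|x|^{2α}) as |x| → ∞. -/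
open MeasureTheory Metric Filter Asymptotics
open scoped ENNReal

local notation "E3" => EuclideanSpace ℝ (Fin 3)

section SGAux


lemma sg_finrank : Module.finrank ℝ (EuclideanSpace ℝ (Fin 3)) = 3 := by
  simp [finrank_euclideanSpace]

lemma sg_map_affine (x : E3) {R : ℝ} (hR : 0 < R) :
    Measure.map (fun y : E3 => x + R • y) volume
      = (ENNReal.ofReal ((R ^ 3)⁻¹)) • volume := by
  ext s hs
  have hT : Measurable fun y : E3 => x + R • y :=
    (measurable_id.const_smul R).const_add x
  rw [Measure.map_apply hT hs, Measure.smul_apply, smul_eq_mul]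
  have h1 : (fun y : E3 => x + R • y) ⁻¹' s = (R • ·) ⁻¹' ((x + ·) ⁻¹' s) := rfl
  rw [h1, Measure.addHaar_preimage_smul volume hR.ne', measure_preimage_add, sg_finrank]
  congr 2
  rw [abs_of_nonneg (by positivity)]

lemma sg_lintegral_scale (f : E3 → ℝ≥0∞) (hf : Measurable f) (x : E3) {R : ℝ} (hR : 0 < R) :
    ∫⁻ y in ball (0:E3) 1, f (x + R • y)
      = ENNReal.ofReal ((R ^ 3)⁻¹) * ∫⁻ z in ball x R, f z := by
  have hT : Measurable fun y : E3 => x + R • y :=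
    (measurable_id.const_smul R).const_add x
  have hkey : ∀ y : E3, (ball (0:E3) 1).indicator (fun y => f (x + R • y)) y
      = (ball x R).indicator f (x + R • y) := by
    intro y
    have hmem : y ∈ ball (0:E3) 1 ↔ x + R • y ∈ ball x R := by
      simp [mem_ball, dist_eq_norm, norm_smul, abs_of_pos hR]
      constructor
      · intro h; calc R * ‖y‖ < R * 1 := by nlinarith [norm_nonneg y]
          _ = R := mul_one R
      · intro h; nlinarith [norm_nonneg y]
    by_cases hy : y ∈ ball (0:E3) 1
    · rw [Set.indicator_of_mem hy, Set.indicator_of_mem (hmem.1 hy)]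
    · rw [Set.indicator_of_notMem hy, Set.indicator_of_notMem (fun h => hy (hmem.2 h))]
  rw [← lintegral_indicator measurableSet_ball]
  simp_rw [hkey]
  rw [← lintegral_map (hf.indicator measurableSet_ball) hT, sg_map_affine x hR,
    lintegral_smul_measure, lintegral_indicator measurableSet_ball, smul_eq_mul]

lemma sg_holder (α : ℝ) (hα : α ∈ Set.Ioo (0:ℝ) 1) {g : E3 → ℝ} (hg : Measurable g)
    (hg0 : ∀ z, 0 ≤ g z) {M : ℝ≥0∞}
    (hM : eLpNorm g (ENNReal.ofReal (3 / (2 * (1 - α)))) volume = M)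
    (x : E3) (R : ℝ) :
    ∫⁻ z in ball x R, ENNReal.ofReal (Real.sqrt (g z))
      ≤ M ^ ((2:ℝ)⁻¹) * (volume (ball x R)) ^ ((2+α)/3) := by
  obtain ⟨hα0, hα1⟩ := hα
  have h1α : (0:ℝ) < 1 - α := by linarith
  set p₀ : ℝ := 3 / (2 * (1 - α)) with hp₀_def
  have hp₀ : 0 < p₀ := by positivity
  set a : ℝ := (1-α)/3 with ha_def
  set b : ℝ := (2+α)/3 with hb_def
  have ha : 0 < a := by positivity
  have hb : 0 < b := by positivity
  have hab : a + b = 1 := by rw [ha_def, hb_def]; ring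
  have hpq := Real.holderConjugate_one_div ha hb hab
  have hmeas : AEMeasurable (fun z => ENNReal.ofReal (Real.sqrt (g z)))
      (volume.restrict (ball x R)) :=
    (ENNReal.measurable_ofReal.comp (Real.continuous_sqrt.measurable.comp hg)).aemeasurable
  have H := ENNReal.lintegral_mul_le_Lp_mul_Lq (volume.restrict (ball x R)) hpq hmeas
    aemeasurable_const (g := fun _ => (1:ℝ≥0∞))
  simp only [Pi.mul_apply, mul_one, ENNReal.one_rpow, one_div_one_div] at H
  -- identify the lintegral of g ^ p₀ with M ^ p₀
  have hEnorm : ∀ z : E3, ‖g z‖ₑ = ENNReal.ofReal (g z) := fun z =>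
    Real.enorm_eq_ofReal (hg0 z)
  have hMp : ∫⁻ z, (ENNReal.ofReal (g z)) ^ p₀ ∂volume = M ^ p₀ := by
    have hP0 : (ENNReal.ofReal p₀) ≠ 0 := by
      simp [ENNReal.ofReal_eq_zero, not_le, hp₀]
    have hPt : (ENNReal.ofReal p₀) ≠ ⊤ := ENNReal.ofReal_ne_top
    rw [eLpNorm_eq_lintegral_rpow_enorm_toReal hP0 hPt] at hM
    rw [ENNReal.toReal_ofReal hp₀.le] at hM
    simp_rw [hEnorm] at hM
    rw [← hM, ← ENNReal.rpow_mul, one_div, inv_mul_cancel₀ hp₀.ne', ENNReal.rpow_one]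
  -- pointwise: (ofReal √(g z)) ^ (1/a) = (ofReal (g z)) ^ p₀
  have hpt : ∀ z : E3, (ENNReal.ofReal (Real.sqrt (g z))) ^ (1/a)
      = (ENNReal.ofReal (g z)) ^ p₀ := by
    intro z
    rw [Real.sqrt_eq_rpow, ← ENNReal.ofReal_rpow_of_nonneg (hg0 z) (by norm_num),
      ← ENNReal.rpow_mul]
    congr 1
    rw [hp₀_def, ha_def]
    field_simp
  calc ∫⁻ z in ball x R, ENNReal.ofReal (Real.sqrt (g z)) ≤
      (∫⁻ z in ball x R, (ENNReal.ofReal (Real.sqrt (g z))) ^ (1/a)) ^ a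
        * (∫⁻ _ in ball x R, (1:ℝ≥0∞)) ^ b := H
    _ ≤ (M ^ p₀) ^ a * (volume (ball x R)) ^ b := by
        gcongr
        · calc ∫⁻ z in ball x R, (ENNReal.ofReal (Real.sqrt (g z))) ^ (1/a)
              = ∫⁻ z in ball x R, (ENNReal.ofReal (g z)) ^ p₀ := by simp_rw [hpt]
            _ ≤ ∫⁻ z, (ENNReal.ofReal (g z)) ^ p₀ ∂volume := setLIntegral_le_lintegral _ _
            _ = M ^ p₀ := hMp
        · simp
    _ = M ^ ((2:ℝ)⁻¹) * (volume (ball x R)) ^ ((2+α)/3) := by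
        have hpa : p₀ * a = (2:ℝ)⁻¹ := by
          rw [hp₀_def, ha_def]; field_simp
        rw [← ENNReal.rpow_mul, hpa]

lemma sg_hasDerivAt (u : E3 → ℝ) (hu : ContDiff ℝ (⊤ : ℕ∞) u) (hu0 : ∀ z, 0 ≤ u z) {ε : ℝ}
    (hε : 0 < ε) (x : E3) (t₀ : ℝ) :
    Integrable (fun y : E3 => fderiv ℝ u (x + t₀ • y) y / (2 * Real.sqrt (u (x + t₀ • y) + ε)))
      (volume.restrict (ball (0:E3) 1)) ∧
    HasDerivAt (fun t => ∫ y in ball (0:E3) 1, Real.sqrt (u (x + t • y) + ε))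
      (∫ y in ball (0:E3) 1,
        fderiv ℝ u (x + t₀ • y) y / (2 * Real.sqrt (u (x + t₀ • y) + ε))) t₀ := by
  have hdiffu : Differentiable ℝ u := hu.differentiable (by simp)
  have hfc : Continuous fun z : E3 => fderiv ℝ u z := hu.continuous_fderiv (by simp)
  have hpos : ∀ z : E3, 0 < u z + ε := fun z => by have := hu0 z; linarith
  -- continuity of F t
  have hFc : ∀ t : ℝ, Continuous fun y : E3 => Real.sqrt (u (x + t • y) + ε) := by
    intro t
    exact ((hu.continuous.comp (continuous_const.add (continuous_const_smul t))).add
      continuous_const).sqrt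
  have hF'c : Continuous fun y : E3 =>
      fderiv ℝ u (x + t₀ • y) y / (2 * Real.sqrt (u (x + t₀ • y) + ε)) := by
    have h1 : Continuous fun y : E3 => x + t₀ • y :=
      continuous_const.add (continuous_const_smul t₀)
    exact ((hfc.comp h1).clm_apply continuous_id).div
      (continuous_const.mul ((hu.continuous.comp h1).add continuous_const).sqrt)
      (fun y => ne_of_gt (mul_pos two_pos (Real.sqrt_pos.2 (hpos _))))
  -- bound on the derivative
  obtain ⟨Cb, hCb⟩ : ∃ Cb, ∀ z ∈ closedBall x (|t₀| + 1), ‖fderiv ℝ u z‖ ≤ Cb := by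
    rcases (isCompact_closedBall x (|t₀| + 1)).exists_bound_of_continuousOn
      (hfc.continuousOn) with ⟨Cb, hCb⟩
    exact ⟨Cb, hCb⟩
  have key := hasDerivAt_integral_of_dominated_loc_of_deriv_le (μ := volume.restrict (ball (0:E3) 1))
    (F := fun t y => Real.sqrt (u (x + t • y) + ε))
    (F' := fun t y => fderiv ℝ u (x + t • y) y / (2 * Real.sqrt (u (x + t • y) + ε)))
    (x₀ := t₀) (bound := fun _ => Cb / (2 * Real.sqrt ε)) (ball_mem_nhds t₀ one_pos)
    (Eventually.of_forall fun t => (hFc t).aestronglyMeasurable)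
    ?_ hF'c.aestronglyMeasurable ?_ ?_ ?_
  · exact key
  · -- integrability of F t₀
    have : IntegrableOn (fun y : E3 => Real.sqrt (u (x + t₀ • y) + ε)) (closedBall 0 1) :=
      (hFc t₀).continuousOn.integrableOn_compact (isCompact_closedBall _ _)
    exact this.mono_set ball_subset_closedBall
  · -- bound ae
    filter_upwards [ae_restrict_mem measurableSet_ball] with y hy
    intro t ht
    have hyn : ‖y‖ ≤ 1 := by
      exact le_of_lt (mem_ball_zero_iff.1 hy)
    have hz : x + t • y ∈ closedBall x (|t₀| + 1) := by
      simp only [mem_closedBall, dist_eq_norm]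
      have : x + t • y - x = t • y := by abel
      rw [this, norm_smul]
      have ht' : |t| ≤ |t₀| + 1 := by
        have := mem_ball_iff_norm.1 ht
        calc |t| = |t₀ + (t - t₀)| := by ring_nf
          _ ≤ |t₀| + |t - t₀| := abs_add_le _ _
          _ ≤ |t₀| + 1 := by
            have : |t - t₀| ≤ 1 := by
              simpa [Real.norm_eq_abs, abs_sub_comm] using le_of_lt this
            linarith
      calc |t| * ‖y‖ ≤ (|t₀| + 1) * 1 := by
            apply mul_le_mul ht' hyn (norm_nonneg y) (by positivity)
        _ = |t₀| + 1 := mul_one _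
    have hnum : ‖fderiv ℝ u (x + t • y) y‖ ≤ Cb := by
      calc ‖fderiv ℝ u (x + t • y) y‖ ≤ ‖fderiv ℝ u (x + t • y)‖ * ‖y‖ :=
            (fderiv ℝ u (x + t • y)).le_opNorm y
        _ ≤ Cb * 1 := mul_le_mul (hCb _ hz) hyn (norm_nonneg y)
            (le_trans (norm_nonneg _) (hCb _ hz))
        _ = Cb := mul_one _
    have hden : 2 * Real.sqrt ε ≤ 2 * Real.sqrt (u (x + t • y) + ε) := by
      have : Real.sqrt ε ≤ Real.sqrt (u (x + t • y) + ε) :=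
        Real.sqrt_le_sqrt (by have := hu0 (x + t • y); linarith)
      linarith
    have hd0 : 0 < 2 * Real.sqrt ε := by positivity
    have hCb0 : 0 ≤ Cb := le_trans (norm_nonneg _) (hCb x (mem_closedBall_self (by positivity)))
    have hnum' : |fderiv ℝ u (x + t • y) y| ≤ Cb := by
      rw [← Real.norm_eq_abs]; exact hnum
    rw [Real.norm_eq_abs, abs_div, abs_of_pos (lt_of_lt_of_le hd0 hden)]
    exact div_le_div₀ hCb0 hnum' hd0 hden
  · -- integrability of the bound
    exact integrableOn_const (hs := measure_ball_lt_top.ne)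
  · -- differentiability ae
    filter_upwards with y
    intro t ht
    have hline : HasDerivAt (fun s : ℝ => x + s • y) y t := by
      simpa using ((hasDerivAt_id t).smul_const y).const_add x
    have h1 : HasDerivAt (fun s : ℝ => u (x + s • y) + ε)
        (fderiv ℝ u (x + t • y) y) t := by
      exact (((hdiffu (x + t • y)).hasFDerivAt).comp_hasDerivAt t hline).add_const ε
    exact h1.sqrt (ne_of_gt (hpos _))

lemma sg_deriv_bound (α : ℝ) (hα : α ∈ Set.Ioo (0:ℝ) 1) {M : ℝ≥0∞} (hMtop : M ≠ ⊤)
    (u g : E3 → ℝ) (hu : ContDiff ℝ (⊤ : ℕ∞) u) (hu0 : ∀ z, 0 ≤ u z)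
    (hg : Measurable g) (hg0 : ∀ z, 0 ≤ g z)
    (hM : eLpNorm g (ENNReal.ofReal (3 / (2 * (1 - α)))) volume = M)
    (hgrad : ∀ z, ‖gradient u z‖ ^ 2 ≤ 4 * u z * g z)
    {ε : ℝ} (hε : 0 < ε) (x : E3) {R : ℝ} (hR : 0 < R) :
    |∫ y in ball (0:E3) 1, fderiv ℝ u (x + R • y) y / (2 * Real.sqrt (u (x + R • y) + ε))|
      ≤ ((M ^ ((2:ℝ)⁻¹) * (volume (ball (0:E3) 1)) ^ (((2:ℝ)+α)/3)).toReal) * R ^ (α - 1) := by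
  obtain ⟨hα0, hα1⟩ := hα
  have hfc : Continuous fun z : E3 => fderiv ℝ u z := hu.continuous_fderiv (by simp)
  have h1 : Continuous fun y : E3 => x + R • y :=
    continuous_const.add (continuous_const_smul R)
  have hpos : ∀ z : E3, 0 < u z + ε := fun z => by have := hu0 z; linarith
  have hF'c : Continuous fun y : E3 =>
      fderiv ℝ u (x + R • y) y / (2 * Real.sqrt (u (x + R • y) + ε)) :=
    ((hfc.comp h1).clm_apply continuous_id).div
      (continuous_const.mul ((hu.continuous.comp h1).add continuous_const).sqrt)
      (fun y => ne_of_gt (mul_pos two_pos (Real.sqrt_pos.2 (hpos _))))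
  -- pointwise bound
  have hpt : ∀ y : E3, ‖y‖ ≤ 1 →
      |fderiv ℝ u (x + R • y) y / (2 * Real.sqrt (u (x + R • y) + ε))|
        ≤ Real.sqrt (g (x + R • y)) := by
    intro y hyn
    set z := x + R • y with hz_def
    have hd0 : 0 < 2 * Real.sqrt (u z + ε) := mul_pos two_pos (Real.sqrt_pos.2 (hpos z))
    have hgnorm : ‖gradient u z‖ = ‖fderiv ℝ u z‖ := by
      rw [show gradient u z = (InnerProductSpace.toDual ℝ _).symm (fderiv ℝ u z) from rfl]
      exact LinearIsometryEquiv.norm_map _ _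
    have h3 : ‖gradient u z‖ ≤ Real.sqrt (4 * u z * g z) := by
      rw [← Real.sqrt_sq (norm_nonneg _)]
      exact Real.sqrt_le_sqrt (hgrad z)
    have h4 : Real.sqrt (4 * u z * g z) = 2 * (Real.sqrt (u z) * Real.sqrt (g z)) := by
      rw [show 4 * u z * g z = (2:ℝ)^2 * (u z * g z) by ring, Real.sqrt_mul (sq_nonneg 2),
        Real.sqrt_sq (by norm_num : (0:ℝ) ≤ 2), Real.sqrt_mul (hu0 z)]
    have hnum : |fderiv ℝ u z y| ≤ 2 * (Real.sqrt (u z) * Real.sqrt (g z)) := by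
      calc |fderiv ℝ u z y| = ‖fderiv ℝ u z y‖ := (Real.norm_eq_abs _).symm
        _ ≤ ‖fderiv ℝ u z‖ * ‖y‖ := (fderiv ℝ u z).le_opNorm y
        _ ≤ ‖fderiv ℝ u z‖ * 1 := by
            apply mul_le_mul_of_nonneg_left hyn (norm_nonneg _)
        _ = ‖gradient u z‖ := by rw [mul_one, hgnorm]
        _ ≤ 2 * (Real.sqrt (u z) * Real.sqrt (g z)) := h3.trans_eq h4
    rw [abs_div, abs_of_pos hd0, div_le_iff₀ hd0]
    have hmono : Real.sqrt (u z) ≤ Real.sqrt (u z + ε) := Real.sqrt_le_sqrt (by linarith)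
    have hgz : 0 ≤ Real.sqrt (g z) := Real.sqrt_nonneg _
    nlinarith [Real.sqrt_nonneg (u z), Real.sqrt_nonneg (u z + ε)]
  -- pass to lintegrals
  have hmeas_sqrt : Measurable fun z : E3 => ENNReal.ofReal (Real.sqrt (g z)) :=
    ENNReal.measurable_ofReal.comp (Real.continuous_sqrt.measurable.comp hg)
  set V := volume (ball (0:E3) 1) with hV_def
  have hVtop : V ≠ ⊤ := measure_ball_lt_top.ne
  have hbound : ∫⁻ y in ball (0:E3) 1, ENNReal.ofReal (Real.sqrt (g (x + R • y)))
      ≤ ENNReal.ofReal (R ^ (α - 1)) * (M ^ ((2:ℝ)⁻¹) * V ^ (((2:ℝ)+α)/3)) := by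
    rw [sg_lintegral_scale _ hmeas_sqrt x hR]
    calc ENNReal.ofReal ((R ^ 3)⁻¹) * ∫⁻ z in ball x R, ENNReal.ofReal (Real.sqrt (g z))
        ≤ ENNReal.ofReal ((R ^ 3)⁻¹)
            * (M ^ ((2:ℝ)⁻¹) * (volume (ball x R)) ^ (((2:ℝ)+α)/3)) := by
          gcongr
          exact sg_holder α ⟨hα0, hα1⟩ hg hg0 hM x R
      _ = ENNReal.ofReal (R ^ (α - 1)) * (M ^ ((2:ℝ)⁻¹) * V ^ (((2:ℝ)+α)/3)) := by
          have hreal : (R^3)⁻¹ * (R^3) ^ (((2:ℝ)+α)/3) = R ^ (α - 1) := by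
            rw [← Real.rpow_natCast R 3, ← Real.rpow_mul hR.le, ← Real.rpow_neg hR.le,
              ← Real.rpow_add hR]
            congr 1
            push_cast
            ring
          have hscal : ENNReal.ofReal ((R^3)⁻¹) * (ENNReal.ofReal (R^3)) ^ (((2:ℝ)+α)/3)
              = ENNReal.ofReal (R ^ (α - 1)) := by
            rw [ENNReal.ofReal_rpow_of_pos (by positivity : (0:ℝ) < R^3),
              ← ENNReal.ofReal_mul (by positivity), hreal]
          rw [Measure.addHaar_ball (μ := volume) x hR.le, sg_finrank, ← hV_def,
            ENNReal.mul_rpow_of_nonneg _ _ (by positivity : (0:ℝ) ≤ ((2:ℝ)+α)/3), ← hscal]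
          ring
  -- assemble
  have haes : AEStronglyMeasurable
      (fun y : E3 => |fderiv ℝ u (x + R • y) y / (2 * Real.sqrt (u (x + R • y) + ε))|)
      (volume.restrict (ball (0:E3) 1)) := hF'c.abs.aestronglyMeasurable
  have habs : |∫ y in ball (0:E3) 1,
        fderiv ℝ u (x + R • y) y / (2 * Real.sqrt (u (x + R • y) + ε))|
      ≤ ∫ y in ball (0:E3) 1,
        |fderiv ℝ u (x + R • y) y / (2 * Real.sqrt (u (x + R • y) + ε))| := by
    simpa only [Real.norm_eq_abs] using MeasureTheory.norm_integral_le_integral_norm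
      (μ := volume.restrict (ball (0:E3) 1))
      (fun y : E3 => fderiv ℝ u (x + R • y) y / (2 * Real.sqrt (u (x + R • y) + ε)))
  refine habs.trans ?_
  calc ∫ y in ball (0:E3) 1,
        |fderiv ℝ u (x + R • y) y / (2 * Real.sqrt (u (x + R • y) + ε))|
      = (∫⁻ y in ball (0:E3) 1, ENNReal.ofReal
          |fderiv ℝ u (x + R • y) y / (2 * Real.sqrt (u (x + R • y) + ε))|).toReal := by
        rw [integral_eq_lintegral_of_nonneg_ae (Eventually.of_forall fun y => abs_nonneg _) haes]
    _ ≤ (ENNReal.ofReal (R ^ (α - 1)) * (M ^ ((2:ℝ)⁻¹) * V ^ (((2:ℝ)+α)/3))).toReal := by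
        apply ENNReal.toReal_mono
        · exact ENNReal.mul_ne_top ENNReal.ofReal_ne_top
            (ENNReal.mul_ne_top (ENNReal.rpow_ne_top_of_nonneg (by norm_num) hMtop)
              (ENNReal.rpow_ne_top_of_nonneg (by positivity) hVtop))
        · refine le_trans ?_ hbound
          apply lintegral_mono_ae
          filter_upwards [ae_restrict_mem measurableSet_ball] with y hy
          exact ENNReal.ofReal_le_ofReal (hpt y (le_of_lt (mem_ball_zero_iff.1 hy)))
    _ = ((M ^ ((2:ℝ)⁻¹) * V ^ (((2:ℝ)+α)/3)).toReal) * R ^ (α - 1) := by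
        rw [ENNReal.toReal_mul, ENNReal.toReal_ofReal (by positivity), mul_comm]

lemma sg_ode (h D : ℝ → ℝ) (K : ℝ) (hK : 0 ≤ K) {α : ℝ} (hα0 : 0 < α) (hα1 : α < 1)
    (hderiv : ∀ t, HasDerivAt h (D t) t) (hD : ∀ t, 0 < t → |D t| ≤ K * t ^ (α - 1))
    {ρ : ℝ} (hρ : 0 ≤ ρ) : |h ρ - h 0| ≤ K / α * ρ ^ α := by
  rcases eq_or_lt_of_le hρ with rfl | hρ'
  · simp [Real.zero_rpow hα0.ne']
  have hcont : ∀ s : ℝ, ContinuousOn (fun t : ℝ => t ^ α * s) (Set.Icc 0 ρ) := fun s =>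
    ((Real.continuous_rpow_const hα0.le).continuousOn).mul continuousOn_const
  have hch : ContinuousOn h (Set.Icc 0 ρ) := fun t _ => ((hderiv t).continuousAt).continuousWithinAt
  have interior_eq : interior (Set.Icc (0:ℝ) ρ) = Set.Ioo 0 ρ := interior_Icc
  have hmain : ∀ s : ℝ, s = 1 ∨ s = -1 →
      s • h ρ - s • h 0 ≤ K / α * ρ ^ α := by
    intro s hs
    -- φ t = K/α * t^α - s • h t is monotone on [0, ρ]
    have hφmono : MonotoneOn (fun t : ℝ => K / α * t ^ α - s * h t) (Set.Icc 0 ρ) := by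
      apply monotoneOn_of_deriv_nonneg (convex_Icc 0 ρ)
      · exact (continuousOn_const.mul
          ((Real.continuous_rpow_const hα0.le).continuousOn)).sub
          (continuousOn_const.mul hch)
      · intro t ht
        rw [interior_eq] at ht
        have hd : HasDerivAt (fun t : ℝ => K / α * t ^ α - s * h t)
            (K / α * (α * t ^ (α - 1)) - s * D t) t := by
          exact (((Real.hasDerivAt_rpow_const (p := α) (Or.inl ht.1.ne'))).const_mul
            (K / α)).sub ((hderiv t).const_mul s)
        exact hd.differentiableAt.differentiableWithinAt
      · intro t ht
        rw [interior_eq] at ht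
        have hd : HasDerivAt (fun t : ℝ => K / α * t ^ α - s * h t)
            (K / α * (α * t ^ (α - 1)) - s * D t) t :=
          (((Real.hasDerivAt_rpow_const (p := α) (Or.inl ht.1.ne'))).const_mul
            (K / α)).sub ((hderiv t).const_mul s)
        rw [hd.deriv]
        have hKα : K / α * (α * t ^ (α - 1)) = K * t ^ (α - 1) := by
          field_simp
        have hDt := hD t ht.1
        have hs' : s * D t ≤ |D t| := by
          rcases hs with rfl | rfl
          · simpa using le_abs_self (D t)
          · simpa using neg_le_abs (D t)
        rw [hKα]
        linarith
    have := hφmono (Set.left_mem_Icc.2 hρ) (Set.right_mem_Icc.2 hρ) hρ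
    simp only [Real.zero_rpow hα0.ne', mul_zero, zero_sub, smul_eq_mul] at this ⊢
    linarith
  have h1 := hmain 1 (Or.inl rfl)
  have h2 := hmain (-1) (Or.inr rfl)
  simp only [one_smul, neg_smul, smul_eq_mul, one_mul] at h1 h2
  rw [abs_sub_le_iff]
  constructor <;> linarith

lemma sg_compare (w : E3 → ℝ) (hw : Continuous w) (hw0 : ∀ z, 0 ≤ w z) (x : E3) {r : ℝ}
    (hr : 0 < r) (hx : ‖x‖ < r) :
    ∫ y in ball (0:E3) 1, w (x + (2*r) • y)
      ≤ (27/8) * ∫ y in ball (0:E3) 1, w ((0:E3) + (3*r) • y) := by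
  have h2r : (0:ℝ) < 2*r := by linarith
  have h3r : (0:ℝ) < 3*r := by linarith
  have hmw : Measurable fun z : E3 => ENNReal.ofReal (w z) :=
    ENNReal.measurable_ofReal.comp hw.measurable
  set I := ∫⁻ y in ball (0:E3) 1, ENNReal.ofReal (w (x + (2*r) • y)) with hI_def
  set J := ∫⁻ y in ball (0:E3) 1, ENNReal.ofReal (w ((0:E3) + (3*r) • y)) with hJ_def
  -- subset inclusion
  have hsub : ball x (2*r) ⊆ ball (0:E3) (3*r) := by
    intro z hz
    rw [mem_ball, dist_eq_norm] at hz ⊢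
    calc ‖z - 0‖ = ‖(z - x) + x‖ := by rw [sub_zero]; congr 1; abel
      _ ≤ ‖z - x‖ + ‖x‖ := norm_add_le _ _
      _ < 2*r + r := by exact add_lt_add hz hx
      _ = 3*r := by ring
  have hIJ : I ≤ ENNReal.ofReal (27/8) * J := by
    rw [hI_def, hJ_def, sg_lintegral_scale _ hmw x h2r, sg_lintegral_scale _ hmw 0 h3r]
    rw [← mul_assoc, ← ENNReal.ofReal_mul (by norm_num)]
    have : (27/8 : ℝ) * ((3*r) ^ 3)⁻¹ = (((2*r) ^ 3)⁻¹ : ℝ) := by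
      field_simp
      ring
    rw [this]
    gcongr
  -- finiteness of J
  obtain ⟨Cw, hCw⟩ := (isCompact_closedBall (0:E3) (3*r)).exists_bound_of_continuousOn
    hw.continuousOn
  have hJtop : J ≠ ⊤ := by
    have hJle : J ≤ ENNReal.ofReal Cw * volume (ball (0:E3) 1) := by
      rw [hJ_def]
      calc ∫⁻ y in ball (0:E3) 1, ENNReal.ofReal (w ((0:E3) + (3*r) • y))
          ≤ ∫⁻ _ in ball (0:E3) 1, ENNReal.ofReal Cw := by
            apply lintegral_mono_ae
            filter_upwards [ae_restrict_mem measurableSet_ball] with y hy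
            apply ENNReal.ofReal_le_ofReal
            have hz : (0:E3) + (3*r) • y ∈ closedBall (0:E3) (3*r) := by
              simp only [mem_closedBall, dist_eq_norm, zero_add, sub_zero, norm_smul,
                Real.norm_eq_abs, abs_of_pos h3r]
              have := le_of_lt (mem_ball_zero_iff.1 hy)
              nlinarith [norm_nonneg y]
            calc w ((0:E3) + (3*r) • y) ≤ |w ((0:E3) + (3*r) • y)| := le_abs_self _
              _ = ‖w ((0:E3) + (3*r) • y)‖ := (Real.norm_eq_abs _).symm
              _ ≤ Cw := hCw _ hz
        _ = ENNReal.ofReal Cw * volume (ball (0:E3) 1) := by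
            rw [setLIntegral_const]
    exact ne_top_of_le_ne_top (ENNReal.mul_ne_top ENNReal.ofReal_ne_top
      measure_ball_lt_top.ne) hJle
  -- convert to real integrals
  have hrealI : ∫ y in ball (0:E3) 1, w (x + (2*r) • y) = I.toReal := by
    rw [hI_def, integral_eq_lintegral_of_nonneg_ae (f := fun y => w (x + (2*r) • y)) (Eventually.of_forall fun y => hw0 _)
      ((hw.comp (continuous_const.add (continuous_const_smul _))).aestronglyMeasurable)]
  have hrealJ : ∫ y in ball (0:E3) 1, w ((0:E3) + (3*r) • y) = J.toReal := by
    rw [hJ_def, integral_eq_lintegral_of_nonneg_ae (f := fun y => w ((0:E3) + (3*r) • y)) (Eventually.of_forall fun y => hw0 _)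
      ((hw.comp (continuous_const.add (continuous_const_smul _))).aestronglyMeasurable)]
  rw [hrealI, hrealJ]
  calc I.toReal ≤ (ENNReal.ofReal (27/8) * J).toReal := by
        apply ENNReal.toReal_mono (ENNReal.mul_ne_top ENNReal.ofReal_ne_top hJtop) hIJ
    _ = (27/8) * J.toReal := by
        rw [ENNReal.toReal_mul, ENNReal.toReal_ofReal (by norm_num)]

end SGAux

/-- Growth estimate in dimension three (abstract form of the bound `|ξ|², |Φ|² = O(r^{2α})` in
the proof of Theorem 1.2(2)): if `u ≥ 0` is smooth and subharmonic on `ℝ³`, `g ≥ 0` is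
measurable with `g ∈ L^{3/(2(1-α))}(ℝ³)` and `|∇u|² ≤ 4 u g`, then there is `C > 0`
depending only on `α` and `‖g‖_{L^{3/(2(1-α))}}` with
`sup_{B_r} u ≤ C (u(0) + r^{2α})` for all `r ≥ 1`; in particular `u = O(|x|^{2α})`. -/
theorem subharmonic_growth_dim3 (α : ℝ) (hα : α ∈ Set.Ioo (0 : ℝ) 1) (M : ℝ≥0∞) :
    ∃ C > (0 : ℝ),
      ∀ u g : EuclideanSpace ℝ (Fin 3) → ℝ,
        ContDiff ℝ (⊤ : ℕ∞) u → (∀ x, 0 ≤ u x) → (∀ x, 0 ≤ laplacian u x) →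
        Measurable g → (∀ x, 0 ≤ g x) →
        MemLp g (ENNReal.ofReal (3 / (2 * (1 - α)))) volume →
        eLpNorm g (ENNReal.ofReal (3 / (2 * (1 - α)))) volume = M →
        (∀ x, ‖gradient u x‖ ^ 2 ≤ 4 * u x * g x) →
        (∀ r : ℝ, 1 ≤ r → ∀ x ∈ ball (0 : EuclideanSpace ℝ (Fin 3)) r,
          u x ≤ C * (u 0 + r ^ (2 * α))) ∧
        u =O[cocompact (EuclideanSpace ℝ (Fin 3))] fun x => ‖x‖ ^ (2 * α) := by
  obtain ⟨hα0, hα1⟩ := hα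
  have hVtop : volume (ball (0:E3) 1) ≠ ⊤ := measure_ball_lt_top.ne
  set K₀ : ℝ := (M ^ ((2:ℝ)⁻¹) * (volume (ball (0:E3) 1)) ^ (((2:ℝ)+α)/3)).toReal
    with hK₀_def
  have hK₀0 : 0 ≤ K₀ := ENNReal.toReal_nonneg
  set Vr : ℝ := (volume (ball (0:E3) 1)).toReal with hVr_def
  have hVr0 : 0 < Vr := ENNReal.toReal_pos (measure_ball_pos _ _ one_pos).ne' hVtop
  set b : ℝ := 13 * K₀ / (Vr * α) with hb_def
  have hb0 : 0 ≤ b := by positivity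
  refine ⟨33 + 2 * b^2, by positivity, ?_⟩
  intro u g hu hu0 _hlap hgm hg0 hmem hM hgrad
  have hMtop : M ≠ ⊤ := by rw [← hM]; exact hmem.2.ne
  have main : ∀ r : ℝ, 1 ≤ r → ∀ x ∈ ball (0:E3) r,
      u x ≤ (33 + 2*b^2) * (u 0 + r ^ (2*α)) := by
    intro r hr x hx
    have hr0 : (0:ℝ) < r := lt_of_lt_of_le one_pos hr
    have hxr : ‖x‖ < r := by simpa [dist_eq_norm] using mem_ball_iff_norm.1 hx
    -- the key √-estimate, for every ε > 0
    have key : ∀ ε : ℝ, 0 < ε →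
        Real.sqrt (u x + ε) ≤ 4 * Real.sqrt (u 0 + ε) + b * r ^ α := by
      intro ε hε
      -- the averaged functions and their derivatives
      set hh : E3 → ℝ → ℝ := fun c t =>
        ∫ y in ball (0:E3) 1, Real.sqrt (u (c + t • y) + ε) with hhh_def
      set DD : E3 → ℝ → ℝ := fun c t =>
        ∫ y in ball (0:E3) 1, fderiv ℝ u (c + t • y) y / (2 * Real.sqrt (u (c + t • y) + ε))
        with hDD_def
      have hasD : ∀ (c : E3) (t : ℝ), HasDerivAt (hh c) (DD c t) t := fun c t =>
        (sg_hasDerivAt u hu hu0 hε c t).2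
      have hDb : ∀ (c : E3) (t : ℝ), 0 < t → |DD c t| ≤ K₀ * t ^ (α - 1) := fun c t ht =>
        sg_deriv_bound α ⟨hα0, hα1⟩ hMtop u g hu hu0 hgm hg0 hM hgrad hε c ht
      have ode : ∀ (c : E3) (ρ : ℝ), 0 ≤ ρ → |hh c ρ - hh c 0| ≤ K₀ / α * ρ ^ α :=
        fun c ρ hρ => sg_ode (hh c) (DD c) K₀ hK₀0 hα0 hα1 (hasD c) (hDb c) hρ
      have hzero : ∀ c : E3, hh c 0 = Vr * Real.sqrt (u c + ε) := by
        intro c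
        rw [hhh_def]
        simp only [zero_smul, add_zero]
        rw [setIntegral_const, smul_eq_mul, hVr_def]
        rfl
      have hcmp : hh x (2*r) ≤ (27/8) * hh 0 (3*r) := by
        rw [hhh_def]
        exact sg_compare (fun z => Real.sqrt (u z + ε))
          ((hu.continuous.add continuous_const).sqrt) (fun z => Real.sqrt_nonneg _)
          x hr0 hxr
      have e1 : hh x 0 - hh x (2*r) ≤ K₀ / α * (2*r) ^ α := by
        have := ode x (2*r) (by linarith)
        have h' := abs_sub_le_iff.1 this
        linarith [h'.2]
      have e2 : hh 0 (3*r) - hh 0 0 ≤ K₀ / α * (3*r) ^ α := by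
        have := ode 0 (3*r) (by linarith)
        have h' := abs_sub_le_iff.1 this
        linarith [h'.1]
      -- (2r)^α ≤ 3 r^α and (3r)^α ≤ 3 r^α
      have hrα : (0:ℝ) ≤ r ^ α := Real.rpow_nonneg hr0.le α
      have hp3 : (3*r) ^ α ≤ 3 * r ^ α := by
        rw [Real.mul_rpow (by norm_num) hr0.le]
        have : (3:ℝ) ^ α ≤ 3 ^ (1:ℝ) :=
          Real.rpow_le_rpow_of_exponent_le (by norm_num) hα1.le
        rw [Real.rpow_one] at this
        exact mul_le_mul_of_nonneg_right this hrα
      have hp2 : (2*r) ^ α ≤ 2 * r ^ α := by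
        rw [Real.mul_rpow (by norm_num) hr0.le]
        have : (2:ℝ) ^ α ≤ 2 ^ (1:ℝ) :=
          Real.rpow_le_rpow_of_exponent_le (by norm_num) hα1.le
        rw [Real.rpow_one] at this
        exact mul_le_mul_of_nonneg_right this hrα
      have hs0 : 0 ≤ Real.sqrt (u 0 + ε) := Real.sqrt_nonneg _
      have hKα : 0 ≤ K₀ / α := by positivity
      -- assemble: Vr √(u x + ε) ≤ 4 Vr √(u 0 + ε) + 13 (K₀/α) r^α
      have hassemble : Vr * Real.sqrt (u x + ε)
          ≤ 4 * (Vr * Real.sqrt (u 0 + ε)) + 13 * (K₀ / α) * r ^ α := by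
        have hx0 := hzero x
        have h00 := hzero 0
        linarith [e1, hcmp, hx0, h00,
          mul_le_mul_of_nonneg_left e2 (by norm_num : (0:ℝ) ≤ 27/8),
          mul_le_mul_of_nonneg_left hp2 hKα,
          mul_le_mul_of_nonneg_left (mul_le_mul_of_nonneg_left hp3 hKα)
            (by norm_num : (0:ℝ) ≤ 27/8),
          mul_nonneg hVr0.le hs0, mul_nonneg hKα hrα]
      have hbV : Vr * (b * r ^ α) = 13 * (K₀ / α) * r ^ α := by
        rw [hb_def]
        field_simp
      have := hassemble
      rw [show (4:ℝ) * (Vr * Real.sqrt (u 0 + ε)) + 13 * (K₀ / α) * r ^ α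
          = Vr * (4 * Real.sqrt (u 0 + ε) + b * r ^ α) by rw [mul_add, hbV]; ring] at this
      exact le_of_mul_le_mul_left this hVr0
    -- square the estimate and let ε → 0
    have hBsq : ∀ ε : ℝ, 0 < ε → u x ≤ 32 * u 0 + 2 * b^2 * r ^ (2*α) + 32 * ε := by
      intro ε hε
      have hk := key ε hε
      have hux : u x + ε = Real.sqrt (u x + ε) ^ 2 :=
        (Real.sq_sqrt (by have := hu0 x; linarith)).symm
      have hu0' : u 0 + ε = Real.sqrt (u 0 + ε) ^ 2 :=
        (Real.sq_sqrt (by have := hu0 0; linarith)).symm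
      have hr2α : (r ^ α) ^ 2 = r ^ (2*α) := by
        rw [← Real.rpow_natCast (r ^ α) 2, ← Real.rpow_mul hr0.le]
        norm_num
        rw [mul_comm]
      have hs1 : 0 ≤ Real.sqrt (u x + ε) := Real.sqrt_nonneg _
      have hs2 : 0 ≤ Real.sqrt (u 0 + ε) := Real.sqrt_nonneg _
      have hrα : (0:ℝ) ≤ r ^ α := Real.rpow_nonneg hr0.le α
      nlinarith [sq_nonneg (4 * Real.sqrt (u 0 + ε) - b * r ^ α),
        mul_nonneg hb0 hrα, sq_nonneg (Real.sqrt (u x + ε))]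
    have hB : u x ≤ 32 * u 0 + 2 * b^2 * r ^ (2*α) := by
      by_contra hcon
      push_neg at hcon
      have := hBsq ((u x - (32 * u 0 + 2 * b^2 * r ^ (2*α))) / 64)
        (by linarith)
      linarith
    have hr2α0 : (0:ℝ) ≤ r ^ (2*α) := Real.rpow_nonneg hr0.le _
    nlinarith [hu0 0, sq_nonneg b]
  refine ⟨main, ?_⟩
  -- Big-O statement
  rw [isBigO_iff]
  refine ⟨(33 + 2*b^2) * (u 0 + 4), ?_⟩
  have hev : {x : E3 | 1 ≤ ‖x‖} ∈ cocompact E3 := by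
    rw [mem_cocompact]
    refine ⟨closedBall 0 1, isCompact_closedBall _ _, fun x hx => ?_⟩
    simp only [Set.mem_compl_iff, mem_closedBall, dist_eq_norm, sub_zero, not_le] at hx
    exact le_of_lt hx
  filter_upwards [hev] with x hx1
  have hx1 : 1 ≤ ‖x‖ := hx1
  have hr : (1:ℝ) ≤ 2*‖x‖ := by linarith
  have hmemb : x ∈ ball (0:E3) (2*‖x‖) := by
    rw [mem_ball, dist_eq_norm, sub_zero]; linarith
  have hb1 := main (2*‖x‖) hr x hmemb
  have h2 : (2*‖x‖) ^ (2*α) ≤ 4 * ‖x‖ ^ (2*α) := by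
    rw [Real.mul_rpow (by norm_num) (norm_nonneg x)]
    have h4 : (2:ℝ)^(2*α) ≤ 2^(2:ℝ) :=
      Real.rpow_le_rpow_of_exponent_le (by norm_num) (by linarith)
    have h5 : (2:ℝ)^(2:ℝ) = 4 := by
      rw [show (2:ℝ) = ((2:ℕ):ℝ) from by norm_num, Real.rpow_natCast]
      norm_num
    have h6 : (0:ℝ) ≤ ‖x‖ ^ (2*α) := Real.rpow_nonneg (norm_nonneg x) _
    nlinarith
  have h3 : 1 ≤ ‖x‖ ^ (2*α) := Real.one_le_rpow hx1 (by positivity)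
  rw [Real.norm_eq_abs, Real.norm_eq_abs, abs_of_nonneg (hu0 x),
    abs_of_nonneg (by positivity : (0:ℝ) ≤ ‖x‖ ^ (2*α))]
  have h6 : (0:ℝ) ≤ ‖x‖ ^ (2*α) := Real.rpow_nonneg (norm_nonneg x) _
  calc u x ≤ (33 + 2*b^2) * (u 0 + (2*‖x‖) ^ (2*α)) := hb1
    _ ≤ (33 + 2*b^2) * (u 0 + 4 * ‖x‖ ^ (2*α)) := by nlinarith [sq_nonneg b, hu0 0]
    _ ≤ (33 + 2*b^2) * (u 0 + 4) * ‖x‖ ^ (2*α) := by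
        nlinarith [mul_nonneg (mul_nonneg (by positivity : (0:ℝ) ≤ 33+2*b^2) (hu0 0))
          (sub_nonneg.2 h3)]
end
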